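/- arXiv:1705.07993 — 6 statements merged into one kernel-verified Lean document; each statement's English description precedes it below -/
import Mathlib

section
/- Let X and Y be finite multisets of items over a strictly ranked ground set, with items of each listed in decreasing rank. If |X| ≥ |Y| and for every k ∈ {1,…,|Y|} the sum of levels of the k best items of X is at least the sum of levels of the k best items of Y, then u(X) ≥ u(Y) for every additive utility function u consistent with the ranking and having the diminishing-differences property. -/
section Aux

-- sum of truncated subtraction, exact when all entries ≥ l
lemma sum_tsub_exact_aux (l : ℕ) : ∀ (s : List ℕ), (∀ x ∈ s, l ≤ x) →
    s.length * l ≤ s.sum ∧ (s.map (· - l)).sum = s.sum - s.length * l := by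
  intro s
  induction s with
  | nil => simp
  | cons t s ih =>
    intro h
    have ht : l ≤ t := h t (by simp)
    have hs : ∀ x ∈ s, l ≤ x := fun x hx => h x (by simp [hx])
    obtain ⟨ih1, ih2⟩ := ih hs
    simp only [List.map_cons, List.sum_cons, List.length_cons, ih2, Nat.succ_mul]
    omega

lemma sum_tsub_exact (l : ℕ) (s : List ℕ) (h : ∀ x ∈ s, l ≤ x) :
    (s.map (· - l)).sum = s.sum - s.length * l := (sum_tsub_exact_aux l s h).2

-- sum of truncated subtraction lower bound
lemma sum_tsub_ge (l : ℕ) : ∀ (s : List ℕ), s.sum - s.length * l ≤ (s.map (· - l)).sum := by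
  intro s
  induction s with
  | nil => simp
  | cons t s ih =>
    simp only [List.map_cons, List.sum_cons, List.length_cons, Nat.succ_mul]
    omega

-- in a sorted-descending list, elements satisfying (l < ·) form the prefix of length countP
lemma take_countP (l : ℕ) : ∀ (s : List ℕ), s.Pairwise (· ≥ ·) →
    (∀ x ∈ s.take (s.countP (fun t => decide (l < t))), l < x) ∧
    (∀ x ∈ s.drop (s.countP (fun t => decide (l < t))), x ≤ l) := by
  intro s
  induction s with
  | nil => simp
  | cons t s ih =>
    intro hsort
    have hsort' : s.Pairwise (· ≥ ·) := hsort.of_cons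
    have hle : ∀ x ∈ s, x ≤ t := fun x hx => List.rel_of_pairwise_cons hsort hx
    by_cases hlt : l < t
    · have : (t :: s).countP (fun t => decide (l < t)) = s.countP (fun t => decide (l < t)) + 1 := by
        simp [List.countP_cons, hlt]
      rw [this]
      obtain ⟨h1, h2⟩ := ih hsort'
      constructor
      · intro x hx
        simp only [List.take_succ_cons, List.mem_cons] at hx
        rcases hx with rfl | hx
        · exact hlt
        · exact h1 x hx
      · intro x hx
        simp only [List.drop_succ_cons] at hx
        exact h2 x hx
    · push_neg at hlt
      have hzero : (t :: s).countP (fun t => decide (l < t)) = 0 := by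
        rw [List.countP_eq_zero]
        intro x hx
        simp only [List.mem_cons] at hx
        have : x ≤ t := by rcases hx with rfl | hx; exact le_refl _; exact hle x hx
        simp; omega
      rw [hzero]
      refine ⟨by simp, ?_⟩
      intro x hx
      simp only [List.drop_zero, List.mem_cons] at hx
      have : x ≤ t := by rcases hx with rfl | hx; exact le_refl _; exact hle x hx
      omega

-- key truncation lemma
lemma lemT (a b : List ℕ) (hb : b.Pairwise (· ≥ ·))
    (hlen : b.length ≤ a.length)
    (hdom : ∀ k, k ≤ b.length → (b.take k).sum ≤ (a.take k).sum)
    (l : ℕ) : (b.map (· - l)).sum ≤ (a.map (· - l)).sum := by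
  set k0 := b.countP (fun t => decide (l < t)) with hk0
  have hk0le : k0 ≤ b.length := List.countP_le_length
  obtain ⟨hbig, hsmall⟩ := take_countP l b hb
  -- b side exact
  have hbsplit : (b.map (· - l)).sum = (b.take k0).sum - k0 * l := by
    conv_lhs => rw [← List.take_append_drop k0 b]
    rw [List.map_append, List.sum_append]
    have h2 : ((b.drop k0).map (· - l)).sum = 0 := by
      apply List.sum_eq_zero
      intro x hx
      simp only [List.mem_map] at hx
      obtain ⟨y, hy, rfl⟩ := hx
      have := hsmall y hy
      omega
    rw [h2, add_zero, sum_tsub_exact l _ (fun x hx => (hbig x hx).le)]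
    rw [List.length_take, Nat.min_eq_left hk0le]
  rw [hbsplit]
  have hlena : (a.take k0).length = k0 := by
    rw [List.length_take]
    exact Nat.min_eq_left (hk0le.trans hlen)
  calc (b.take k0).sum - k0 * l ≤ (a.take k0).sum - k0 * l := by
        have := hdom k0 hk0le; omega
    _ ≤ ((a.take k0).map (· - l)).sum := by
        have := sum_tsub_ge l (a.take k0); rwa [hlena] at this
    _ ≤ (a.map (· - l)).sum := by
        conv_rhs => rw [← List.take_append_drop k0 a]
        rw [List.map_append, List.sum_append]
        exact Nat.le_add_right _ _

-- telescoping
lemma telescope (v : ℕ → ℝ) : ∀ t, 1 ≤ t → ∑ j ∈ Finset.Ico 1 t, (v (j+1) - v j) = v t - v 1 := by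
  intro t
  induction t with
  | zero => omega
  | succ t ih =>
    intro _
    by_cases ht : 1 ≤ t
    · rw [Finset.sum_Ico_succ_top ht, ih ht]; ring
    · have : t = 0 := by omega
      subst this; simp

-- expansion of sum of v over a list
lemma expand (M : ℕ) (v : ℕ → ℝ) : ∀ (b : List ℕ), (∀ x ∈ b, 1 ≤ x ∧ x ≤ M) →
    (b.map v).sum = b.length * v 1 +
      ∑ j ∈ Finset.Ico 1 M, (v (j+1) - v j) * (b.countP (fun t => decide (j < t)) : ℝ) := by
  intro b
  induction b with
  | nil => simp
  | cons t b ih =>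
    intro h
    obtain ⟨ht1, htM⟩ := h t (by simp)
    have hb : ∀ x ∈ b, 1 ≤ x ∧ x ≤ M := fun x hx => h x (by simp [hx])
    simp only [List.map_cons, List.sum_cons, List.length_cons, ih hb, List.countP_cons]
    have hsingle : ∑ j ∈ Finset.Ico 1 M, (v (j+1) - v j) *
        (((if (fun t => decide (j < t)) t = true then 1 else 0) : ℕ) : ℝ) = v t - v 1 := by
      rw [← telescope v t ht1]
      rw [← Finset.sum_filter_add_sum_filter_not (Finset.Ico 1 M) (fun j => j < t)]
      have h1 : (Finset.Ico 1 M).filter (fun j => j < t) = Finset.Ico 1 t := by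
        rw [Finset.Ico_filter_lt, min_eq_right htM]
      have h2 : ∑ j ∈ (Finset.Ico 1 M).filter (fun j => ¬ j < t), (v (j+1) - v j) *
          (((if (fun t => decide (j < t)) t = true then 1 else 0) : ℕ) : ℝ) = 0 := by
        apply Finset.sum_eq_zero
        intro j hj
        simp only [Finset.mem_filter] at hj
        simp [hj.2]
      rw [h2, add_zero]
      rw [h1] at *
      apply Finset.sum_congr rfl
      intro j hj
      simp only [Finset.mem_Ico] at hj
      simp [hj.2]
    have hcongr : ∀ j ∈ Finset.Ico 1 M,
        (v (j+1) - v j) * (((b.countP (fun t => decide (j < t)) +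
          (if (fun t => decide (j < t)) t = true then 1 else 0)) : ℕ) : ℝ) =
        (v (j+1) - v j) * (b.countP (fun t => decide (j < t)) : ℝ) +
        (v (j+1) - v j) * (((if (fun t => decide (j < t)) t = true then 1 else 0) : ℕ) : ℝ) := by
      intro j _
      push_cast
      ring
    rw [Finset.sum_congr rfl hcongr, Finset.sum_add_distrib, hsingle]
    push_cast
    ring

-- tail count sums equal truncated subtraction sums
lemma tailsum (M l : ℕ) : ∀ (b : List ℕ), (∀ x ∈ b, x ≤ M) →
    ∑ j ∈ Finset.Ico l M, (b.countP (fun t => decide (j < t))) = (b.map (· - l)).sum := by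
  intro b
  induction b with
  | nil => simp
  | cons t b ih =>
    intro h
    have htM : t ≤ M := h t (by simp)
    have hb : ∀ x ∈ b, x ≤ M := fun x hx => h x (by simp [hx])
    simp only [List.countP_cons, List.map_cons, List.sum_cons, Finset.sum_add_distrib, ih hb]
    have : ∑ j ∈ Finset.Ico l M, (if (fun t => decide (j < t)) t = true then 1 else 0) = t - l := by
      have h1 : (Finset.Ico l M).filter (fun j => j < t) = Finset.Ico l t := by
        rw [Finset.Ico_filter_lt, min_eq_right htM]
      calc (∑ j ∈ Finset.Ico l M, if (fun t => decide (j < t)) t = true then 1 else 0)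
          = ∑ j ∈ (Finset.Ico l M).filter (fun j => j < t), 1 := by
            rw [Finset.sum_filter]
            apply Finset.sum_congr rfl
            intro j _
            by_cases hj : j < t <;> simp [hj]
        _ = t - l := by rw [h1]; simp [Nat.card_Ico]
    rw [this]
    omega

-- Abel summation bound
lemma abel (M : ℕ) (D Δ : ℕ → ℝ)
    (hD0 : ∀ j, 1 ≤ j → j + 1 ≤ M → 0 ≤ D j)
    (hDmono : ∀ j, 1 ≤ j → j + 2 ≤ M → D j ≤ D (j+1))
    (hS : ∀ l, 1 ≤ l → 0 ≤ ∑ j ∈ Finset.Ico l M, Δ j) :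
    0 ≤ ∑ j ∈ Finset.Ico 1 M, D j * Δ j := by
  have key : ∀ k l, 1 ≤ l → M - l ≤ k →
      D l * (∑ j ∈ Finset.Ico l M, Δ j) ≤ ∑ j ∈ Finset.Ico l M, D j * Δ j := by
    intro k
    induction k with
    | zero =>
      intro l hl hk
      have : M ≤ l := by omega
      simp [Finset.Ico_eq_empty_of_le this]
    | succ k ih =>
      intro l hl hk
      by_cases hlM : M ≤ l
      · simp [Finset.Ico_eq_empty_of_le hlM]
      push_neg at hlM
      rw [Finset.sum_eq_sum_Ico_succ_bot hlM, Finset.sum_eq_sum_Ico_succ_bot hlM (fun j => D j * Δ j)]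
      by_cases hl1 : l + 1 < M
      · have h1 := ih (l+1) (by omega) (by omega)
        have h2 := hS (l+1) (by omega)
        have h3 := hDmono l hl (by omega)
        nlinarith
      · have : Finset.Ico (l+1) M = ∅ := Finset.Ico_eq_empty (by omega)
        rw [this]
        simp only [Finset.sum_empty, add_zero]
        exact le_of_eq (by ring)
  by_cases hM : 1 < M
  · have h1 := key (M-1) 1 le_rfl (by omega)
    have h2 := hS 1 le_rfl
    have h3 := hD0 1 le_rfl (by omega)
    nlinarith
  · have : Finset.Ico 1 M = ∅ := Finset.Ico_eq_empty (by omega)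
    simp [this]

lemma corelem (M : ℕ) (v : ℕ → ℝ)
    (hpos : ∀ j, 1 ≤ j → j ≤ M → 0 < v j)
    (hmono : ∀ j, 1 ≤ j → j + 1 ≤ M → v j ≤ v (j+1))
    (hconv : ∀ j, 1 ≤ j → j + 2 ≤ M → v (j+1) - v j ≤ v (j+2) - v (j+1))
    (a b : List ℕ) (hb : b.Pairwise (· ≥ ·))
    (haM : ∀ x ∈ a, 1 ≤ x ∧ x ≤ M) (hbM : ∀ x ∈ b, 1 ≤ x ∧ x ≤ M)
    (hlen : b.length ≤ a.length)
    (hdom : ∀ k, k ≤ b.length → (b.take k).sum ≤ (a.take k).sum) :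
    (b.map v).sum ≤ (a.map v).sum := by
  set n := b.length with hn
  set a' := a.take n with ha'
  have ha'M : ∀ x ∈ a', 1 ≤ x ∧ x ≤ M := fun x hx => haM x (List.mem_of_mem_take hx)
  have hlena' : a'.length = n := by rw [ha', List.length_take]; exact Nat.min_eq_left hlen
  have hdom' : ∀ k, k ≤ n → (b.take k).sum ≤ (a'.take k).sum := by
    intro k hk
    rw [ha', List.take_take, Nat.min_eq_left hk]
    exact hdom k hk
  -- step 1 : a' vs a
  have step1 : (a'.map v).sum ≤ (a.map v).sum := by
    conv_rhs => rw [← List.take_append_drop n a]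
    rw [List.map_append, List.sum_append, ← ha']
    have : 0 ≤ ((a.drop n).map v).sum := by
      apply List.sum_nonneg
      intro x hx
      simp only [List.mem_map] at hx
      obtain ⟨y, hy, rfl⟩ := hx
      have hy' := haM y (List.mem_of_mem_drop hy)
      exact (hpos y hy'.1 hy'.2).le
    linarith
  -- step 2 : b vs a'
  have e1 := expand M v b hbM
  have e2 := expand M v a' ha'M
  have hS : ∀ l, 1 ≤ l → 0 ≤ ∑ j ∈ Finset.Ico l M,
      (((a'.countP (fun t => decide (j < t))) : ℝ) - ((b.countP (fun t => decide (j < t))) : ℝ)) := by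
    intro l _
    rw [Finset.sum_sub_distrib]
    have hta := tailsum M l a' (fun x hx => (ha'M x hx).2)
    have htb := tailsum M l b (fun x hx => (hbM x hx).2)
    have hT := lemT a' b hb (by omega) hdom' l
    have hca : (∑ j ∈ Finset.Ico l M, ((a'.countP (fun t => decide (j < t))) : ℝ))
        = ((a'.map (· - l)).sum : ℝ) := by exact_mod_cast congrArg Nat.cast hta
    have hcb : (∑ j ∈ Finset.Ico l M, ((b.countP (fun t => decide (j < t))) : ℝ))
        = ((b.map (· - l)).sum : ℝ) := by exact_mod_cast congrArg Nat.cast htb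
    rw [hca, hcb]
    have : ((b.map (· - l)).sum : ℝ) ≤ ((a'.map (· - l)).sum : ℝ) := by exact_mod_cast hT
    linarith
  have habel := abel M (fun j => v (j+1) - v j)
      (fun j => (((a'.countP (fun t => decide (j < t))) : ℝ) - ((b.countP (fun t => decide (j < t))) : ℝ)))
      (fun j h1 h2 => sub_nonneg.mpr (hmono j h1 h2))
      (fun j h1 h2 => hconv j h1 h2) hS
  have hsplit : ∑ j ∈ Finset.Ico 1 M, (v (j+1) - v j) *
        (((a'.countP (fun t => decide (j < t))) : ℝ) - ((b.countP (fun t => decide (j < t))) : ℝ))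
      = (∑ j ∈ Finset.Ico 1 M, (v (j+1) - v j) * ((a'.countP (fun t => decide (j < t))) : ℝ))
      - (∑ j ∈ Finset.Ico 1 M, (v (j+1) - v j) * ((b.countP (fun t => decide (j < t))) : ℝ)) := by
    rw [← Finset.sum_sub_distrib]
    apply Finset.sum_congr rfl
    intro j _
    ring
  rw [hsplit] at habel
  have : (b.map v).sum ≤ (a'.map v).sum := by
    rw [e1, e2, hlena', hn]
    linarith
  linarith

end Aux


variable {α : Type*} [Fintype α] [LinearOrder α]

/-- Borda level: the best item has level `Fintype.card α`, the worst has level 1. -/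
def lev (x : α) : ℕ := (Finset.univ.filter (· ≤ x)).card

section LevAux

-- basic lev facts
lemma lev_pos (x : α) : 1 ≤ lev x := by
  have : x ∈ Finset.univ.filter (· ≤ x) := by simp
  exact Finset.card_pos.mpr ⟨x, this⟩

lemma lev_le_card (x : α) : lev x ≤ Fintype.card α := by
  exact (Finset.card_filter_le Finset.univ (· ≤ x)).trans (le_of_eq (Finset.card_univ))

lemma lev_strictMono : StrictMono (lev (α := α)) := by
  intro x y hxy
  apply Finset.card_lt_card
  rw [Finset.ssubset_iff_of_subset]
  · exact ⟨y, by simp, by simp [not_le.mpr hxy]⟩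
  · intro z hz
    simp only [Finset.mem_filter, Finset.mem_univ, true_and] at hz ⊢
    exact hz.trans hxy.le

lemma lev_surj {j : ℕ} (h1 : 1 ≤ j) (h2 : j ≤ Fintype.card α) : ∃ x : α, lev x = j := by
  have himg : Finset.image lev (Finset.univ : Finset α) = Finset.Icc 1 (Fintype.card α) := by
    apply Finset.eq_of_subset_of_card_le
    · intro t ht
      simp only [Finset.mem_image] at ht
      obtain ⟨x, _, rfl⟩ := ht
      simp [Finset.mem_Icc, lev_pos, lev_le_card]
    · rw [Finset.card_image_of_injective _ lev_strictMono.injective]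
      simp [Nat.card_Icc]
  have : j ∈ Finset.image lev (Finset.univ : Finset α) := by
    rw [himg]; simp [Finset.mem_Icc]; omega
  simpa using this

end LevAux

/-- Total Borda level of a multiset. -/
def levSum (X : Multiset α) : ℕ := (X.map lev).sum

/-- Sum of levels of the `k` best (highest-ranked) items of `X`. -/
def topLevSum (X : Multiset α) (k : ℕ) : ℕ := (((X.map lev).sort (· ≥ ·)).take k).sum

/-- Sum of levels of the `k` worst (lowest-ranked) items of `X`. -/
def botLevSum (X : Multiset α) (k : ℕ) : ℕ := (((X.map lev).sort (· ≤ ·)).take k).sum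

/-- Additive extension of `u` to multisets. -/
def msum (u : α → ℝ) (X : Multiset α) : ℝ := (X.map u).sum

/-- `u` is consistent with the ranking: `u x > u y` iff `x ≻ y`. -/
def Consistent (u : α → ℝ) : Prop := ∀ x y : α, u x > u y ↔ y < x

/-- Diminishing differences: for items with consecutive levels `x3 ≻ x2 ≻ x1`,
`u x3 - u x2 ≥ u x2 - u x1`. -/
def DD (u : α → ℝ) : Prop :=
  ∀ x1 x2 x3 : α, lev x3 = lev x2 + 1 → lev x2 = lev x1 + 1 → u x2 - u x1 ≤ u x3 - u x2

/-- Increasing differences: for items with consecutive levels `x3 ≻ x2 ≻ x1`,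
`u x3 - u x2 ≤ u x2 - u x1`. -/
def ID (u : α → ℝ) : Prop :=
  ∀ x1 x2 x3 : α, lev x3 = lev x2 + 1 → lev x2 = lev x1 + 1 → u x3 - u x2 ≤ u x2 - u x1

/-- if |X| ≥ |Y| and for every k ∈ {1,…,|Y|} the total level of the k best
items of X is at least that of the k best items of Y, then u(X) ≥ u(Y) for every
positive additive utility consistent with the ranking having diminishing differences. -/
theorem stmt1 (X Y : Multiset α)
    (hcard : Multiset.card Y ≤ Multiset.card X)
    (hlev : ∀ k, 1 ≤ k → k ≤ Multiset.card Y → topLevSum Y k ≤ topLevSum X k)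
    (u : α → ℝ) (hpos : ∀ x, 0 < u x) (hc : Consistent u) (hdd : DD u) :
    msum u Y ≤ msum u X := by
  rcases isEmpty_or_nonempty α with hemp | hne
  · have hX : X = 0 := Multiset.eq_zero_of_forall_notMem (fun x => (IsEmpty.false x).elim)
    have hY : Y = 0 := Multiset.eq_zero_of_forall_notMem (fun x => (IsEmpty.false x).elim)
    simp [hX, hY, msum]
  set M := Fintype.card α with hM
  set inv : ℕ → α := Function.invFun lev with hinv
  set v : ℕ → ℝ := fun j => u (inv j) with hv
  have hux : ∀ x : α, u x = v (lev x) := by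
    intro x
    have : inv (lev x) = x := Function.leftInverse_invFun lev_strictMono.injective x
    rw [hv]; simp only; rw [this]
  have hlevinv : ∀ j, 1 ≤ j → j ≤ M → lev (inv j) = j := by
    intro j h1 h2
    exact Function.invFun_eq (lev_surj h1 h2)
  have hpos' : ∀ j, 1 ≤ j → j ≤ M → 0 < v j := fun j _ _ => hpos (inv j)
  have hmono : ∀ j, 1 ≤ j → j + 1 ≤ M → v j ≤ v (j+1) := by
    intro j h1 h2
    have l1 : lev (inv j) = j := hlevinv j h1 (by omega)
    have l2 : lev (inv (j+1)) = j + 1 := hlevinv (j+1) (by omega) h2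
    have hlt : inv j < inv (j+1) := by
      have : lev (inv j) < lev (inv (j+1)) := by omega
      exact lev_strictMono.lt_iff_lt.mp this
    exact ((hc (inv (j+1)) (inv j)).mpr hlt).le
  have hconv : ∀ j, 1 ≤ j → j + 2 ≤ M → v (j+1) - v j ≤ v (j+2) - v (j+1) := by
    intro j h1 h2
    exact hdd (inv j) (inv (j+1)) (inv (j+2))
      (by rw [hlevinv (j+2) (by omega) (by omega), hlevinv (j+1) (by omega) (by omega)])
      (by rw [hlevinv (j+1) (by omega) (by omega), hlevinv j (by omega) (by omega)])
  set a : List ℕ := (X.map lev).sort (· ≥ ·) with ha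
  set b : List ℕ := (Y.map lev).sort (· ≥ ·) with hb
  have hbs : b.Pairwise (· ≥ ·) := Multiset.pairwise_sort _ _
  have haM : ∀ x ∈ a, 1 ≤ x ∧ x ≤ M := by
    intro x hx
    rw [ha] at hx
    rw [Multiset.mem_sort] at hx
    rw [Multiset.mem_map] at hx
    obtain ⟨y, _, rfl⟩ := hx
    exact ⟨lev_pos y, lev_le_card y⟩
  have hbM : ∀ x ∈ b, 1 ≤ x ∧ x ≤ M := by
    intro x hx
    rw [hb] at hx
    rw [Multiset.mem_sort] at hx
    rw [Multiset.mem_map] at hx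
    obtain ⟨y, _, rfl⟩ := hx
    exact ⟨lev_pos y, lev_le_card y⟩
  have hlena : a.length = Multiset.card X := by
    rw [ha, Multiset.length_sort, Multiset.card_map]
  have hlenb : b.length = Multiset.card Y := by
    rw [hb, Multiset.length_sort, Multiset.card_map]
  have hlen : b.length ≤ a.length := by rw [hlena, hlenb]; exact hcard
  have hdom : ∀ k, k ≤ b.length → (b.take k).sum ≤ (a.take k).sum := by
    intro k hk
    rcases Nat.eq_zero_or_pos k with rfl | hk1
    · simp
    · exact hlev k hk1 (by omega)
  have hmain := corelem M v hpos' hmono hconv a b hbs haM hbM hlen hdom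
  have hmsum : ∀ (Z : Multiset α), msum u Z = (((Z.map lev).sort (· ≥ ·)).map v).sum := by
    intro Z
    have h1 : Z.map u = (Z.map lev).map v := by
      rw [Multiset.map_map]
      exact Multiset.map_congr rfl (fun x _ => hux x)
    have h2 : ((Z.map lev).map v).sum = ((((Z.map lev).sort (· ≥ ·)) : Multiset ℕ).map v).sum := by
      rw [Multiset.sort_eq]
    rw [msum, h1, h2, Multiset.map_coe, Multiset.sum_coe]
  rw [hmsum X, hmsum Y]
  exact hmain
end

section
/- Let X and Y be finite multisets of items over a strictly ranked ground set, each listed in decreasing rank. If there exists k ≤ min(|X|,|Y|) such that the total level of the k best items of Y strictly exceeds the total level of the k best items of X, then there exists an additive DD utility function u consistent with the ranking such that u(Y) > u(X). -/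
variable {α : Type*} [Fintype α] [LinearOrder α]

lemma mconv (t r : ℝ) :
    max (r + 1 - t) 0 - max (r - t) 0 ≤ max (r + 2 - t) 0 - max (r + 1 - t) 0 := by
  rcases le_or_gt (r + 1 - t) 0 with h | h
  · have h1 : max (r + 1 - t) 0 = 0 := max_eq_right h
    nlinarith [le_max_right (r - t) (0:ℝ), le_max_right (r + 2 - t) (0:ℝ)]
  · have h1 : max (r + 1 - t) 0 = r + 1 - t := max_eq_left h.le
    nlinarith [le_max_left (r - t) (0:ℝ), le_max_left (r + 2 - t) (0:ℝ)]

lemma sum_map_sub_const (l : List ℕ) (c : ℝ) :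
    (l.map (fun (a : ℕ) => (a : ℝ) - c)).sum = (l.sum : ℝ) - l.length * c := by
  induction l with
  | nil => simp
  | cons a l ih =>
    simp only [List.map_cons, List.sum_cons, List.length_cons, ih, List.sum_cons]
    push_cast; ring

/-- if for some k ≤ min(|X|,|Y|) the total level of the k best items of Y
strictly exceeds that of the k best items of X, then some positive additive DD utility
consistent with the ranking satisfies u(Y) > u(X). -/
theorem stmt3 (X Y : Multiset α)
    (h : ∃ k, 1 ≤ k ∧ k ≤ Multiset.card X ∧ k ≤ Multiset.card Y ∧
      topLevSum X k < topLevSum Y k) :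
    ∃ u : α → ℝ, (∀ x, 0 < u x) ∧ Consistent u ∧ DD u ∧ msum u X < msum u Y := by
  obtain ⟨k, hk1, hkX, hkY, hlt⟩ := h
  set Lx : List ℕ := (X.map lev).sort (· ≥ ·) with hLx
  set Ly : List ℕ := (Y.map lev).sort (· ≥ ·) with hLy
  have hLxlen : Lx.length = Multiset.card X := by
    rw [hLx, Multiset.length_sort, Multiset.card_map]
  have hLylen : Ly.length = Multiset.card Y := by
    rw [hLy, Multiset.length_sort, Multiset.card_map]
  set t : ℕ := Lx.getD k 0 with ht
  set ε : ℝ := 1 / (2 * ((levSum X : ℝ) + 1)) with hε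
  have hden : (0:ℝ) < 2 * ((levSum X : ℝ) + 1) := by positivity
  have hεpos : 0 < ε := by positivity
  set m : ℕ → ℝ := fun a => max ((a : ℝ) - t) 0 with hm
  set g : ℕ → ℝ := fun a => m a + ε * a with hg
  have gmono : StrictMono g := by
    intro a b hab
    have h1 : m a ≤ m b := by
      simp only [hm]
      exact max_le_max (sub_le_sub_right (Nat.cast_le.mpr hab.le) _) le_rfl
    have h2 : ε * a < ε * b := by
      apply mul_lt_mul_of_pos_left _ hεpos
      exact_mod_cast hab
    simp only [hg]; linarith
  refine ⟨fun x => g (lev x), ?_, ?_, ?_, ?_⟩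
  · intro x
    have h1 : (1:ℝ) ≤ lev x := by exact_mod_cast lev_pos x
    have h2 : (0:ℝ) ≤ m (lev x) := le_max_right _ _
    simp only [hg]
    nlinarith
  · -- Consistent
    intro x y
    exact (gmono.comp lev_strictMono).lt_iff_lt
  · -- DD
    intro x1 x2 x3 h32 h21
    have hc := mconv (t : ℝ) (lev x1 : ℝ)
    simp only [hg, hm, h32, h21]
    push_cast
    have e1 : ((lev x1 : ℝ) + 1 + 1) = (lev x1 : ℝ) + 2 := by ring
    rw [e1]
    linarith
  · -- main inequality
    -- express msum via sorted lists
    have hmsum : ∀ (Z : Multiset α) (LZ : List ℕ), LZ = (Z.map lev).sort (· ≥ ·) →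
        msum (fun x => g (lev x)) Z = (LZ.map m).sum + ε * (levSum Z : ℝ) := by
      intro Z LZ hLZ
      have h1 : msum (fun x => g (lev x)) Z = ((Z.map lev).map g).sum := by
        rw [msum, Multiset.map_map]; rfl
      have h2 : ((Z.map lev).map g).sum
          = ((Z.map lev).map m).sum + ε * ((Z.map lev).map (fun a : ℕ => (a:ℝ))).sum := by
        simp only [hg]
        rw [Multiset.sum_map_add, Multiset.sum_map_mul_left]
      have h3 : ((Z.map lev).map (fun a : ℕ => (a:ℝ))).sum = (levSum Z : ℝ) := by
        rw [levSum]
        push_cast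
        rfl
      have h4 : ((Z.map lev).map m).sum = (LZ.map m).sum := by
        conv_lhs => rw [← Multiset.sort_eq (Z.map lev) (· ≥ ·), ← hLZ]
        rw [Multiset.map_coe, Multiset.sum_coe]
      rw [h1, h2, h3, h4]
    have hkLx : k ≤ Lx.length := by rw [hLxlen]; exact hkX
    have hkLy : k ≤ Ly.length := by rw [hLylen]; exact hkY
    have hsx : Lx.Pairwise (· ≥ ·) := Multiset.pairwise_sort _ _
    have hsy : Ly.Pairwise (· ≥ ·) := Multiset.pairwise_sort _ _
    -- elements of the top k of Lx are ≥ t, the rest are ≤ t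
    have hx1 : ∀ a ∈ Lx.take k, t ≤ a := by
      intro a ha
      rcases lt_or_ge k Lx.length with hk | hk
      · have htmem : t ∈ Lx.drop k := by
          rw [List.drop_eq_getElem_cons hk]
          have : t = Lx[k] := by rw [ht, List.getD_eq_getElem _ _ hk]
          rw [this]; exact List.mem_cons_self
        exact hsx.rel_of_mem_take_of_mem_drop ha htmem
      · have : t = 0 := by
          rw [ht, List.getD_eq_default]
          exact hk
        omega
    have hx2 : ∀ a ∈ Lx.drop k, a ≤ t := by
      intro a ha
      have hk : k < Lx.length := by
        by_contra hc
        push_neg at hc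
        rw [List.drop_eq_nil_of_le hc] at ha
        exact absurd ha List.not_mem_nil
      have hdropsort : (Lx.drop k).Pairwise (· ≥ ·) :=
        List.Pairwise.sublist (List.drop_sublist k Lx) hsx
      rw [List.drop_eq_getElem_cons hk] at ha hdropsort
      have htk : t = Lx[k] := by rw [ht, List.getD_eq_getElem _ _ hk]
      rcases List.mem_cons.mp ha with h | h
      · omega
      · have := (List.pairwise_cons.mp hdropsort).1 a h
        omega
    -- value of the m-sum on Lx
    have htake_lenx : (Lx.take k).length = k := by
      rw [List.length_take]; omega
    have htake_leny : (Ly.take k).length = k := by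
      rw [List.length_take]; omega
    have hSX : (Lx.map m).sum = ((Lx.take k).sum : ℝ) - (k : ℝ) * t := by
      conv_lhs => rw [← List.take_append_drop k Lx]
      rw [List.map_append, List.sum_append]
      have e1 : (Lx.take k).map m = (Lx.take k).map (fun (a : ℕ) => (a : ℝ) - t) := by
        apply List.map_congr_left
        intro a ha
        simp only [hm]
        exact max_eq_left (by
          have := hx1 a ha
          have : (t:ℝ) ≤ a := by exact_mod_cast this
          linarith)
      have e2 : ((Lx.drop k).map m).sum = 0 := by
        apply List.sum_eq_zero
        intro x hx
        rcases List.mem_map.mp hx with ⟨a, ha, rfl⟩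
        simp only [hm]
        exact max_eq_right (by
          have := hx2 a ha
          have : (a:ℝ) ≤ t := by exact_mod_cast this
          linarith)
      rw [e1, e2, sum_map_sub_const, htake_lenx]
      ring
    -- lower bound for the m-sum on Ly
    have hSY : ((Ly.take k).sum : ℝ) - (k : ℝ) * t ≤ (Ly.map m).sum := by
      conv_rhs => rw [← List.take_append_drop k Ly]
      rw [List.map_append, List.sum_append]
      have e1 : ((Ly.take k).map (fun (a : ℕ) => (a : ℝ) - t)).sum ≤ ((Ly.take k).map m).sum := by
        apply List.sum_le_sum
        intro a _
        exact le_max_left _ _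
      have e2 : (0:ℝ) ≤ ((Ly.drop k).map m).sum := by
        apply List.sum_nonneg
        intro x hx
        rcases List.mem_map.mp hx with ⟨a, ha, rfl⟩
        exact le_max_right _ _
      have e3 := sum_map_sub_const (Ly.take k) (t : ℝ)
      rw [htake_leny] at e3
      linarith [e1, e2, e3.symm.le, e3.le]
    -- compare top sums
    have htop : ((Lx.take k).sum : ℝ) + 1 ≤ ((Ly.take k).sum : ℝ) := by
      have : topLevSum X k + 1 ≤ topLevSum Y k := hlt
      have h' : (Lx.take k).sum + 1 ≤ (Ly.take k).sum := this
      exact_mod_cast h'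
    have hmain : (Lx.map m).sum + 1 ≤ (Ly.map m).sum := by
      rw [hSX]; linarith
    rw [hmsum X Lx hLx, hmsum Y Ly hLy]
    have key : ε * (2 * ((levSum X : ℝ) + 1)) = 1 := by
      rw [hε]; field_simp
    have hLXnn : (0:ℝ) ≤ (levSum X : ℝ) := Nat.cast_nonneg _
    have hLYnn : (0:ℝ) ≤ ε * (levSum Y : ℝ) :=
      mul_nonneg hεpos.le (Nat.cast_nonneg _)
    nlinarith [hmain, key, hLYnn, hεpos]
end

section
/- Suppose M = m·n for an integer m and each of the n agents has a different ≻_i-best item. Then the balanced round-robin procedure (repeatedly: agents 1,…,n each take their best remaining item, then agents n,…,1 each take their best remaining item) produces an allocation (X_1,…,X_n) such that for every agent i and every profile of consistent additive DD utility functions, n·u_i(X_i) ≥ u_i(M); i.e., an NDD-proportional allocation exists. -/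
variable {α : Type*} [Fintype α] [DecidableEq α] {n : ℕ}

/- Agent ranking represented by a level equiv L : the item x has Borda level (L x) + 1,
so the best item has level Fintype.card α and the worst has level 1;
x is ranked above y iff L y < L x. -/

/-- u is consistent with the ranking given by L. -/
def ConsistentL (L : α ≃ Fin (Fintype.card α)) (u : α → ℝ) : Prop :=
  ∀ x y : α, u x > u y ↔ L y < L x

/-- Diminishing differences w.r.t. the ranking given by L. -/
def DDL (L : α ≃ Fin (Fintype.card α)) (u : α → ℝ) : Prop :=
  ∀ x1 x2 x3 : α, (L x3 : ℕ) = (L x2 : ℕ) + 1 → (L x2 : ℕ) = (L x1 : ℕ) + 1 →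
    u x2 - u x1 ≤ u x3 - u x2

/-- Increasing differences w.r.t. the ranking given by L. -/
def IDL (L : α ≃ Fin (Fintype.card α)) (u : α → ℝ) : Prop :=
  ∀ x1 x2 x3 : α, (L x3 : ℕ) = (L x2 : ℕ) + 1 → (L x2 : ℕ) = (L x1 : ℕ) + 1 →
    u x3 - u x2 ≤ u x2 - u x1

/-- An allocation: a partition of all items among the n agents. -/
def IsPartition (X : Fin n → Finset α) : Prop :=
  (∀ i j : Fin n, i ≠ j → Disjoint (X i) (X j)) ∧ Finset.univ.biUnion X = Finset.univ


/-- The agent picking at time step t in the balanced round-robin procedure: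
in even rounds agents pick in order 0,…,n-1, in odd rounds in order n-1,…,0. -/
def balancedIndex (n : ℕ) (hn : 0 < n) (t : ℕ) : Fin n :=
  if (t / n) % 2 = 0 then ⟨t % n, Nat.mod_lt t hn⟩
  else ⟨n - 1 - t % n, lt_of_le_of_lt (Nat.sub_le _ _) (Nat.sub_lt hn one_pos)⟩

/-- State of the balanced round-robin procedure after t single picks:
first component is the set of remaining items, second the bundles acquired so far.
At each step the picking agent takes his best (highest-level) remaining item. -/
def rrState (L : Fin n → α ≃ Fin (Fintype.card α)) (hn : 0 < n) :
    ℕ → Finset α × (Fin n → Finset α)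
  | 0 => (Finset.univ, fun _ => ∅)
  | (t + 1) =>
      let s := rrState L hn t
      let i := balancedIndex n hn t
      if h : s.1.Nonempty then
        let b := (L i).symm ((s.1.image (L i)).max' (h.image _))
        (s.1.erase b, Function.update s.2 i (insert b (s.2 i)))
      else s


set_option linter.unusedSectionVars false
set_option maxHeartbeats 1000000


open Finset

/-- Gauss-type sum. -/
lemma rrGaussSum : ∀ (D p N : ℕ), p + D = N → 2 * ∑ k ∈ Ico p N, (N - k) = D * (D + 1) := by
  intro D
  induction D with
  | zero => intro p N h; subst h; simp
  | succ d ih =>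
    intro p N h
    have hlt : p < N := by omega
    rw [Finset.sum_eq_sum_Ico_succ_bot hlt]
    have := ih (p+1) N (by omega)
    have h2 : N - p = d + 1 := by omega
    have : 2 * ((N - p) + ∑ k ∈ Ico (p+1) N, (N - k)) = 2*(d+1) + d*(d+1) := by omega
    rw [this]
    ring

/-- partial sum lower bound -/
lemma rrHsum (b n : ℕ) : ∀ K : ℕ, 4*K*n ≤ b →
    K * b ≤ 2*K*(K+1)*n + ∑ j ∈ range K, (b - (4*j+4)*n) := by
  intro K
  induction K with
  | zero => simp
  | succ k ih =>
    intro hK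
    have e0 : 4*(k+1)*n = (4*k+4)*n := by ring
    have e1 : (k+1)*b = k*b + b := by ring
    have e2 : 2*(k+1)*(k+1+1)*n = 2*k*(k+1)*n + (4*k+4)*n := by ring
    have emono : 4*k*n ≤ 4*(k+1)*n := Nat.mul_le_mul_right _ (by omega)
    have h1 : 4*k*n ≤ b := by omega
    have h2 := ih h1
    rw [Finset.sum_range_succ]
    omega

lemma rrCore (n K τ S : ℕ) (hτ : τ + 1 ≤ 2*n)
    (h1 : K*(2*(2*n*K+τ)+1) ≤ 2*K*(K+1)*n + S) :
    (2*n*K+τ)*((2*n*K+τ)+1) ≤ 2*n*(2*n*K+τ) + 2*n*S := by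
  have hA : 2*n*(K*(2*(2*n*K+τ)+1)) ≤ 2*n*(2*K*(K+1)*n + S) := Nat.mul_le_mul_left _ h1
  have hB : τ*(τ+1) ≤ τ*(2*n) := Nat.mul_le_mul_left _ hτ
  nlinarith [hA, hB]

/-- The main arithmetic inequality, phrased with `a = M - 1 - p`. -/
lemma rrArithMain (n m i a : ℕ) (hn : 0 < n) (hm : 0 < m) (hi : i < n) (ha : a + 1 ≤ m * n) :
    a * (a+1) ≤ 2 * n * (a + ∑ r ∈ Ico 1 m,
      (a - (r * n + (if r % 2 = 0 then i else n - 1 - i)))) := by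
  set f : ℕ → ℕ := fun r => a - (r * n + (if r % 2 = 0 then i else n - 1 - i)) with hf
  set P := (m - 1) / 2 with hP
  -- pairing
  have hpair : ∀ j : ℕ, (2*a+1) - (4*j+4)*n ≤ f (2*j+1) + f (2*j+2) := by
    intro j
    have e1 : (2*j+1) % 2 = 1 := by omega
    have e2 : (2*j+2) % 2 = 0 := by omega
    have hf1 : f (2*j+1) = a - ((2*j+1)*n + (n-1-i)) := by simp [hf, e1]
    have hf2 : f (2*j+2) = a - ((2*j+2)*n + i) := by simp [hf, e2]
    rw [hf1, hf2]
    have e3 : (2*j+1)*n + (2*j+2)*n + n = (4*j+4)*n := by ring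
    generalize (2*j+1)*n = A at *
    generalize (2*j+2)*n = B at *
    generalize (4*j+4)*n = C at *
    omega
  have hsum_pairs : ∀ Q : ℕ, ∑ r ∈ Ico 1 (2*Q+1), f r = ∑ j ∈ range Q, (f (2*j+1) + f (2*j+2)) := by
    intro Q
    induction Q with
    | zero => simp
    | succ q ih =>
      have h1 : (1:ℕ) ≤ 2*q+1 := by omega
      have h2 : (1:ℕ) ≤ 2*q+2 := by omega
      have e : 2*(q+1)+1 = (2*q+2)+1 := by ring
      rw [e, Finset.sum_Ico_succ_top h2]
      have e' : 2*q+2 = (2*q+1)+1 := by ring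
      rw [e', Finset.sum_Ico_succ_top h1, ih, Finset.sum_range_succ]
      have e'' : (2*q+1+1) = 2*q+2 := by omega
      rw [e'', add_assoc]
  -- K
  set b := 2*a+1 with hb
  set K := b / (4*n) with hK
  have h4n : 0 < 4*n := by omega
  set ρ := b % (4*n) with hρ
  have hdm : (4*n)*K + ρ = b := Nat.div_add_mod b (4*n)
  have hρlt : ρ < 4*n := Nat.mod_lt _ h4n
  have br1 : (4*n)*K = 4*K*n := by ring
  have hKb : 4*K*n + ρ = b := by omega
  have hKb' : 4*K*n ≤ b := by omega
  have hKP : K ≤ P := by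
    by_contra hc
    push_neg at hc
    have h2K : m ≤ 2*K := by omega
    have hm1 : 2*n*m ≤ 2*n*(2*K) := Nat.mul_le_mul_left _ h2K
    have br2 : 2*n*(2*K) = 4*K*n := by ring
    have br3 : 2*n*m = 2*(m*n) := by ring
    omega
  have hrange : ∑ j ∈ range K, (b - (4*j+4)*n) ≤ ∑ j ∈ range P, (f (2*j+1) + f (2*j+2)) := by
    calc ∑ j ∈ range K, (b - (4*j+4)*n) ≤ ∑ j ∈ range K, (f (2*j+1) + f (2*j+2)) :=
          Finset.sum_le_sum (fun j _ => hpair j)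
      _ ≤ ∑ j ∈ range P, (f (2*j+1) + f (2*j+2)) :=
          Finset.sum_le_sum_of_subset (Finset.range_subset_range.mpr hKP)
  have hinc : ∑ j ∈ range P, (f (2*j+1) + f (2*j+2)) ≤ ∑ r ∈ Ico 1 m, f r := by
    rw [← hsum_pairs]
    apply Finset.sum_le_sum_of_subset
    apply Finset.Ico_subset_Ico le_rfl
    omega
  have hH := rrHsum b n K hKb'
  -- final
  have br4 : 4*K*n = 2*(2*n*K) := by ring
  obtain ⟨τ, hτ⟩ : ∃ τ, ρ = 2*τ+1 := ⟨ρ/2, by omega⟩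
  have haK : a = 2*n*K + τ := by omega
  have hτ2n : τ + 1 ≤ 2*n := by omega
  have hS : K * b ≤ 2*K*(K+1)*n + ∑ r ∈ Ico 1 m, f r := by
    have := le_trans hrange hinc
    omega
  rw [haK]
  have := rrCore n K τ (∑ r ∈ Ico 1 m, f r) hτ2n (by rw [← haK, ← hb]; exact hS)
  have brf := mul_add (2*n) (2*n*K+τ) (∑ r ∈ Ico 1 m, f r)
  show (2*n*K+τ)*((2*n*K+τ)+1) ≤ 2*n*((2*n*K+τ) + ∑ r ∈ Ico 1 m, f r)
  omega

section Comb

variable (L : Fin n → α ≃ Fin (Fintype.card α)) (hn : 0 < n)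

/-- the picked element belongs to the remaining set -/
lemma rrPick_mem (i : Fin n) (T : Finset α) (h : T.Nonempty) :
    (L i).symm ((T.image (L i)).max' (h.image _)) ∈ T := by
  have hm := Finset.max'_mem (T.image (L i)) (h.image _)
  rw [Finset.mem_image] at hm
  obtain ⟨a, ha, hae⟩ := hm
  rw [← hae]
  simpa using ha

/-- lower bound on the level of the picked element -/
lemma rrMax'_ge {N : ℕ} (T : Finset (Fin N)) (h : T.Nonempty) :
    T.card ≤ (T.max' h : ℕ) + 1 := by
  have hsub : T ⊆ Finset.Iic (T.max' h) := fun x hx => Finset.mem_Iic.mpr (Finset.le_max' T x hx)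
  calc T.card ≤ (Finset.Iic (T.max' h)).card := Finset.card_le_card hsub
    _ = (T.max' h : ℕ) + 1 := by rw [Fin.card_Iic]

lemma rrCard_ge (t : ℕ) : Fintype.card α - t ≤ ((rrState L hn t).1).card := by
  induction t with
  | zero => simp [rrState]
  | succ t ih =>
    rw [rrState]
    by_cases h : (rrState L hn t).1.Nonempty
    · rw [dif_pos h]
      have := Finset.card_erase_le (s := (rrState L hn t).1)
        (a := (L (balancedIndex n hn t)).symm (((rrState L hn t).1.image (L (balancedIndex n hn t))).max' (h.image _)))
      have hcard := Finset.card_erase_of_mem (rrPick_mem L (balancedIndex n hn t) _ h)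
      simp only []
      rw [hcard]
      omega
    · rw [dif_neg h]
      have hc : (rrState L hn t).1.card = 0 := by
        rw [Finset.card_eq_zero]
        exact Finset.not_nonempty_iff_eq_empty.mp h
      omega

lemma rrNonempty {t : ℕ} (ht : t < Fintype.card α) : ((rrState L hn t).1).Nonempty := by
  rw [← Finset.card_pos]
  have := rrCard_ge L hn t
  omega

lemma rrDisjoint (t : ℕ) (j : Fin n) : Disjoint ((rrState L hn t).2 j) ((rrState L hn t).1) := by
  induction t with
  | zero => simp [rrState]
  | succ t ih =>
    rw [rrState]
    by_cases h : (rrState L hn t).1.Nonempty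
    · rw [dif_pos h]
      simp only []
      set x := (L (balancedIndex n hn t)).symm (((rrState L hn t).1.image (L (balancedIndex n hn t))).max' (h.image _)) with hx
      by_cases hj : j = balancedIndex n hn t
      · subst hj
        rw [Function.update_self]
        refine Finset.disjoint_left.mpr ?_
        intro a ha hmem
        rw [Finset.mem_insert] at ha
        rcases ha with rfl | ha
        · exact (Finset.notMem_erase _ _) hmem
        · exact (Finset.disjoint_left.mp ih ha) (Finset.mem_of_mem_erase hmem)
      · rw [Function.update_of_ne hj]
        exact ih.mono_right (Finset.erase_subset _ _)
    · rw [dif_neg h]; exact ih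

lemma rrMono {t t' : ℕ} (h : t ≤ t') (j : Fin n) :
    (rrState L hn t).2 j ⊆ (rrState L hn t').2 j := by
  induction t' with
  | zero => simp_all
  | succ t' ih =>
    rcases Nat.lt_or_ge t (t'+1) with hlt | hge
    · have hsub : (rrState L hn t').2 j ⊆ (rrState L hn (t'+1)).2 j := by
        rw [rrState]
        by_cases hne : (rrState L hn t').1.Nonempty
        · rw [dif_pos hne]
          simp only []
          by_cases hj : j = balancedIndex n hn t'
          · subst hj; rw [Function.update_self]; exact Finset.subset_insert _ _
          · rw [Function.update_of_ne hj]
        · rw [dif_neg hne]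
      exact (ih (by omega)).trans hsub
    · have : t = t' + 1 := by omega
      subst this
      rfl

end Comb

section Round0

variable (L : Fin n → α ≃ Fin (Fintype.card α)) (hn : 0 < n)
variable (b : Fin n → α)

lemma rrRound0 (hbinj : Function.Injective b)
    (hbest : ∀ (i : Fin n) (y : α), L i y ≤ L i (b i)) (hMn : n ≤ Fintype.card α) :
    ∀ t, t ≤ n →
      (rrState L hn t).1 = Finset.univ \ Finset.image b (Finset.univ.filter (fun j : Fin n => (j:ℕ) < t)) ∧
      ∀ j : Fin n, (rrState L hn t).2 j = if (j:ℕ) < t then {b j} else ∅ := by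
  intro t
  induction t with
  | zero =>
    intro _
    constructor
    · simp [rrState]
    · intro j; simp [rrState]
  | succ t ih =>
    intro ht
    obtain ⟨ih1, ih2⟩ := ih (by omega)
    have htn : t < n := by omega
    have hne : ((rrState L hn t).1).Nonempty := rrNonempty L hn (by omega)
    have hit : balancedIndex n hn t = ⟨t, htn⟩ := by
      unfold balancedIndex
      rw [if_pos (by rw [Nat.div_eq_of_lt htn]), Fin.mk.injEq, Nat.mod_eq_of_lt htn]
    set it : Fin n := ⟨t, htn⟩ with hitdef
    have hbmem : b it ∈ (rrState L hn t).1 := by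
      rw [ih1, Finset.mem_sdiff]
      refine ⟨Finset.mem_univ _, ?_⟩
      rw [Finset.mem_image]
      rintro ⟨j, hj, hje⟩
      rw [Finset.mem_filter] at hj
      have : j = it := hbinj hje
      subst this
      simp only [hitdef] at hj
      omega
    have hmax : ((rrState L hn t).1.image (L it)).max' (hne.image _) = L it (b it) := by
      apply le_antisymm
      · apply Finset.max'_le
        intro z hz
        rw [Finset.mem_image] at hz
        obtain ⟨a, _, rfl⟩ := hz
        exact hbest it a
      · exact Finset.le_max' _ _ (Finset.mem_image_of_mem _ hbmem)
    have hpick : (L it).symm (((rrState L hn t).1.image (L it)).max' (hne.image _)) = b it := by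
      rw [hmax, Equiv.symm_apply_apply]
    have hstate : rrState L hn (t+1) =
        ((rrState L hn t).1.erase (b it),
          Function.update (rrState L hn t).2 it (insert (b it) ((rrState L hn t).2 it))) := by
      rw [rrState]
      simp only [dif_pos hne, hit]
      rw [hpick]
    have hfilter : (Finset.univ.filter (fun j : Fin n => (j:ℕ) < t + 1)) =
        insert it (Finset.univ.filter (fun j : Fin n => (j:ℕ) < t)) := by
      ext j
      simp only [Finset.mem_filter, Finset.mem_insert, Finset.mem_univ, true_and]
      constructor
      · intro hj
        rcases Nat.lt_or_ge (j:ℕ) t with h' | h'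
        · exact Or.inr h'
        · left; apply Fin.ext; simp only [hitdef]; omega
      · rintro (rfl | hj)
        · simp only [hitdef]; omega
        · omega
    constructor
    · rw [hstate]
      simp only []
      rw [ih1, hfilter, Finset.image_insert]
      ext a
      simp only [Finset.mem_erase, Finset.mem_sdiff, Finset.mem_univ, true_and,
        Finset.mem_insert, Finset.mem_image, not_or]
    · intro j
      rw [hstate]
      simp only []
      by_cases hj : j = it
      · rw [hj, Function.update_self, ih2 it]
        have h1 : ¬ ((it:ℕ) < t) := by simp only [hitdef]; omega
        have h2 : (it:ℕ) < t + 1 := by simp only [hitdef]; omega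
        rw [if_neg h1, if_pos h2]
        rfl
      · rw [Function.update_of_ne hj, ih2 j]
        have : ((j:ℕ) < t + 1) ↔ ((j:ℕ) < t) := by
          have : (j:ℕ) ≠ t := by
            intro hc
            exact hj (Fin.ext (by simp only [hitdef]; omega))
          omega
        rw [if_congr this rfl rfl]

lemma rrBestMem (hbinj : Function.Injective b)
    (hbest : ∀ (i : Fin n) (y : α), L i y ≤ L i (b i))
    (hMn : n ≤ Fintype.card α) {t : ℕ} (ht : n ≤ t) (i : Fin n) :
    (rrState L hn t).2 i = (rrState L hn t).2 i ∧ b i ∈ (rrState L hn t).2 i := by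
  refine ⟨rfl, ?_⟩
  have h := (rrRound0 L hn b hbinj hbest hMn n le_rfl).2 i
  have : b i ∈ (rrState L hn n).2 i := by
    rw [h, if_pos i.isLt]
    exact Finset.mem_singleton_self _
  exact rrMono L hn ht i this

lemma rrAtN (hbinj : Function.Injective b)
    (hbest : ∀ (i : Fin n) (y : α), L i y ≤ L i (b i))
    (hMn : n ≤ Fintype.card α) (i : Fin n) :
    (rrState L hn n).2 i = {b i} := by
  have h := (rrRound0 L hn b hbinj hbest hMn n le_rfl).2 i
  rw [h, if_pos i.isLt]

end Round0

section Main

variable (L : Fin n → α ≃ Fin (Fintype.card α)) (hn : 0 < n)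

lemma rrPickLevel {t : ℕ} (ht : t < Fintype.card α) (j : Fin n)
    (hne : ((rrState L hn t).1).Nonempty) :
    Fintype.card α - 1 - t ≤
      ((L j) ((L j).symm (((rrState L hn t).1.image (L j)).max' (hne.image _))) : ℕ) := by
  rw [Equiv.apply_symm_apply]
  have hcard : ((rrState L hn t).1.image (L j)).card = ((rrState L hn t).1).card :=
    Finset.card_image_of_injective _ (L j).injective
  have h1 := rrMax'_ge ((rrState L hn t).1.image (L j)) (hne.image _)
  have h2 := rrCard_ge L hn t
  omega

lemma rrWeight (b : Fin n → α) (hbinj : Function.Injective b)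
    (hbest : ∀ (i : Fin n) (y : α), L i y ≤ L i (b i))
    (hMn : n ≤ Fintype.card α) (i : Fin n) (p : ℕ) :
    ∀ t, n ≤ t → t ≤ Fintype.card α →
      ∑ s ∈ Finset.Ico n t, (if balancedIndex n hn s = i then (Fintype.card α - 1 - s - p) else 0)
        ≤ ∑ x ∈ ((rrState L hn t).2 i).erase (b i), ((L i x : ℕ) - p) := by
  have hWstart : True := trivial
  intro t ht
  induction t, ht using Nat.le_induction with
  | base => intro _; simp
  | succ t ht ih =>
    intro htM
    have ihv := ih (by omega)
    rw [Finset.sum_Ico_succ_top ht]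
    have hne : ((rrState L hn t).1).Nonempty := rrNonempty L hn (by omega)
    have hstate : rrState L hn (t+1) =
        ((rrState L hn t).1.erase ((L (balancedIndex n hn t)).symm
            (((rrState L hn t).1.image (L (balancedIndex n hn t))).max' (hne.image _))),
          Function.update (rrState L hn t).2 (balancedIndex n hn t)
            (insert ((L (balancedIndex n hn t)).symm
              (((rrState L hn t).1.image (L (balancedIndex n hn t))).max' (hne.image _)))
              ((rrState L hn t).2 (balancedIndex n hn t)))) := by
      rw [rrState]
      simp only [dif_pos hne]
    set x := (L (balancedIndex n hn t)).symm
      (((rrState L hn t).1.image (L (balancedIndex n hn t))).max' (hne.image _)) with hxdef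
    have hxmem : x ∈ (rrState L hn t).1 := rrPick_mem L _ _ hne
    by_cases hj : balancedIndex n hn t = i
    · rw [if_pos hj]
      have hxnotold : x ∉ (rrState L hn t).2 i :=
        fun hmem => (Finset.disjoint_left.mp (rrDisjoint L hn t i) hmem) hxmem
      have hbmem : b i ∈ (rrState L hn t).2 i :=
        (rrBestMem L hn b hbinj hbest hMn ht i).2
      have hxb : x ≠ b i := fun h => hxnotold (h ▸ hbmem)
      have hbundle : (rrState L hn (t+1)).2 i = insert x ((rrState L hn t).2 i) := by
        rw [hstate]
        simp only []
        rw [hj, Function.update_self]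
      rw [hbundle, Finset.erase_insert_of_ne hxb, Finset.sum_insert (fun hc =>
        hxnotold (Finset.mem_of_mem_erase hc))]
      have hlev : Fintype.card α - 1 - t ≤ ((L i) x : ℕ) := by
        have h0 := rrPickLevel L hn (by omega : t < Fintype.card α) (balancedIndex n hn t) hne
        rw [← hxdef] at h0
        rw [hj] at h0
        exact h0
      have : Fintype.card α - 1 - t - p ≤ ((L i) x : ℕ) - p := by omega
      omega
    · rw [if_neg hj]
      have hbundle : (rrState L hn (t+1)).2 i = (rrState L hn t).2 i := by
        rw [hstate]
        simp only []
        rw [Function.update_of_ne (fun h => hj h.symm)]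
      rw [hbundle]
      omega

lemma rrCount (i : Fin n) :
    ∀ t, t ≤ Fintype.card α →
      ∑ s ∈ Finset.range t, (if balancedIndex n hn s = i then 1 else 0)
        ≤ ((rrState L hn t).2 i).card := by
  intro t
  induction t with
  | zero => intro _; simp
  | succ t ih =>
    intro htM
    have ihv := ih (by omega)
    rw [Finset.sum_range_succ]
    have hne : ((rrState L hn t).1).Nonempty := rrNonempty L hn (by omega)
    have hstate : rrState L hn (t+1) =
        ((rrState L hn t).1.erase ((L (balancedIndex n hn t)).symm
            (((rrState L hn t).1.image (L (balancedIndex n hn t))).max' (hne.image _))),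
          Function.update (rrState L hn t).2 (balancedIndex n hn t)
            (insert ((L (balancedIndex n hn t)).symm
              (((rrState L hn t).1.image (L (balancedIndex n hn t))).max' (hne.image _)))
              ((rrState L hn t).2 (balancedIndex n hn t)))) := by
      rw [rrState]
      simp only [dif_pos hne]
    set x := (L (balancedIndex n hn t)).symm
      (((rrState L hn t).1.image (L (balancedIndex n hn t))).max' (hne.image _)) with hxdef
    have hxmem : x ∈ (rrState L hn t).1 := rrPick_mem L _ _ hne
    by_cases hj : balancedIndex n hn t = i
    · rw [if_pos hj]
      have hxnotold : x ∉ (rrState L hn t).2 i :=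
        fun hmem => (Finset.disjoint_left.mp (rrDisjoint L hn t i) hmem) hxmem
      have hbundle : (rrState L hn (t+1)).2 i = insert x ((rrState L hn t).2 i) := by
        rw [hstate]
        simp only []
        rw [hj, Function.update_self]
      rw [hbundle, Finset.card_insert_of_notMem hxnotold]
      omega
    · rw [if_neg hj]
      have hbundle : (rrState L hn (t+1)).2 i = (rrState L hn t).2 i := by
        rw [hstate]
        simp only []
        rw [Function.update_of_ne (fun h => hj h.symm)]
      rw [hbundle]
      omega

lemma rrReindex (i : Fin n) (f : ℕ → ℕ) (r1 : ℕ) :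
    ∀ r2, r1 ≤ r2 →
    ∑ s ∈ Finset.Ico (r1*n) (r2*n), (if balancedIndex n hn s = i then f s else 0)
      = ∑ r ∈ Finset.Ico r1 r2, f (r*n + (if r % 2 = 0 then (i:ℕ) else n - 1 - (i:ℕ))) := by
  intro r2 hr12
  induction r2, hr12 using Nat.le_induction with
  | base => simp
  | succ r2 hr2 ih =>
    have hmul1 : r1 * n ≤ r2 * n := Nat.mul_le_mul_right _ hr2
    have hmul2 : r2 * n ≤ (r2+1) * n := Nat.mul_le_mul_right _ (by omega)
    rw [← Finset.sum_Ico_consecutive _ hmul1 hmul2, ih, Finset.sum_Ico_succ_top hr2]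
    congr 1
    have hblock : (r2+1)*n = r2*n + n := by ring
    rw [hblock, Finset.sum_Ico_eq_sum_range]
    have hlen : r2*n + n - r2*n = n := by omega
    rw [hlen]
    set c : ℕ := if r2 % 2 = 0 then (i:ℕ) else n - 1 - (i:ℕ) with hc
    have hcn : c < n := by
      rw [hc]
      split <;> omega
    have hcong : ∀ k ∈ Finset.range n,
        (if balancedIndex n hn (r2*n + k) = i then f (r2*n + k) else 0)
          = (if k = c then f (r2*n + k) else 0) := by
      intro k hk
      rw [Finset.mem_range] at hk
      have hdiv : (r2*n + k) / n = r2 := by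
        rw [mul_comm, Nat.mul_add_div hn, Nat.div_eq_of_lt hk, add_zero]
      have hmod : (r2*n + k) % n = k := by
        rw [mul_comm, Nat.mul_add_mod, Nat.mod_eq_of_lt hk]
      have hbi : balancedIndex n hn (r2*n+k)
          = if r2 % 2 = 0 then (⟨k, hk⟩ : Fin n) else ⟨n - 1 - k, by omega⟩ := by
        unfold balancedIndex
        simp only [hdiv, hmod]
      refine if_congr ?_ rfl rfl
      rw [hbi, hc]
      have hi := i.isLt
      by_cases hr : r2 % 2 = 0
      · rw [if_pos hr, if_pos hr, Fin.ext_iff]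
      · rw [if_neg hr, if_neg hr, Fin.ext_iff]
        show n - 1 - k = (i:ℕ) ↔ k = n - 1 - (i:ℕ)
        omega
    rw [Finset.sum_congr rfl hcong, Finset.sum_ite_eq' (Finset.range n) c (fun k => f (r2*n+k))]
    rw [if_pos (Finset.mem_range.mpr hcn)]

end Main

section Key

variable (L : Fin n → α ≃ Fin (Fintype.card α)) (hn : 0 < n)

/-- KEY combinatorial inequality in ℕ. -/
lemma rrKey {m : ℕ} (hm : 0 < m) (hM : Fintype.card α = m * n)
    (b : Fin n → α) (hbinj : Function.Injective b)
    (hbest : ∀ (i : Fin n) (y : α), L i y ≤ L i (b i)) (i : Fin n) (p : ℕ) :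
    2 * ∑ k ∈ Finset.Ico p (Fintype.card α - 1), (Fintype.card α - 1 - k)
      ≤ 2 * n * ∑ x ∈ (rrState L hn (Fintype.card α)).2 i, ((L i x : ℕ) - p) := by
  have hMn : n ≤ Fintype.card α := by
    rw [hM]
    calc n = 1 * n := (one_mul n).symm
    _ ≤ m * n := Nat.mul_le_mul_right _ hm
  have hM0 : 0 < Fintype.card α := by
    rw [hM]; positivity
  rcases Nat.lt_or_ge p (Fintype.card α - 1) with hp | hp
  · -- main case
    set a := Fintype.card α - 1 - p with ha
    have hgauss := rrGaussSum a p (Fintype.card α - 1) (by omega)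
    rw [hgauss]
    -- weight bound
    have hW := rrWeight L hn b hbinj hbest hMn i p (Fintype.card α) hMn le_rfl
    -- reindex
    have hRe0 := rrReindex hn i (fun s => Fintype.card α - 1 - s - p) 1 m hm
    rw [one_mul, ← hM] at hRe0
    have hRe : ∑ s ∈ Finset.Ico n (Fintype.card α),
          (if balancedIndex n hn s = i then (Fintype.card α - 1 - s - p) else 0)
        = ∑ r ∈ Finset.Ico 1 m,
            (Fintype.card α - 1 - (r * n + (if r % 2 = 0 then (i:ℕ) else n - 1 - (i:ℕ))) - p) :=
      hRe0
    -- the arithmetic bound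
    have hA := rrArithMain n m (i:ℕ) a hn hm i.isLt (by omega)
    -- match the two sums over rounds
    have hsum_eq : ∑ r ∈ Finset.Ico 1 m, (a - (r * n + (if r % 2 = 0 then (i:ℕ) else n - 1 - (i:ℕ))))
        = ∑ s ∈ Finset.Ico n (Fintype.card α),
            (if balancedIndex n hn s = i then (Fintype.card α - 1 - s - p) else 0) := by
      rw [hRe]
      refine Finset.sum_congr rfl (fun r _ => ?_)
      omega
    -- best item value
    have hbv : ((L i (b i)) : ℕ) = Fintype.card α - 1 := by
      have h1 : ((L i (b i)) : ℕ) ≤ Fintype.card α - 1 := by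
        have := (L i (b i)).isLt; omega
      have h2 : Fintype.card α - 1 ≤ ((L i (b i)) : ℕ) := by
        have htop := hbest i ((L i).symm ⟨Fintype.card α - 1, by omega⟩)
        rw [Equiv.apply_symm_apply] at htop
        have := Fin.le_def.mp htop
        simpa using this
      omega
    have hbmem : b i ∈ (rrState L hn (Fintype.card α)).2 i :=
      (rrBestMem L hn b hbinj hbest hMn hMn i).2
    have hsplit : (((L i (b i)) : ℕ) - p)
          + ∑ x ∈ ((rrState L hn (Fintype.card α)).2 i).erase (b i), ((L i x : ℕ) - p)
        = ∑ x ∈ (rrState L hn (Fintype.card α)).2 i, ((L i x : ℕ) - p) :=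
      Finset.add_sum_erase _ (fun x => ((L i x : ℕ) - p)) hbmem
    have hchain : a + ∑ r ∈ Finset.Ico 1 m,
          (a - (r * n + (if r % 2 = 0 then (i:ℕ) else n - 1 - (i:ℕ))))
        ≤ ∑ x ∈ (rrState L hn (Fintype.card α)).2 i, ((L i x : ℕ) - p) := by
      rw [hsum_eq]
      have h1 : a ≤ ((L i (b i)) : ℕ) - p := by omega
      omega
    calc a * (a + 1) ≤ 2 * n * (a + ∑ r ∈ Finset.Ico 1 m,
          (a - (r * n + (if r % 2 = 0 then (i:ℕ) else n - 1 - (i:ℕ))))) := hA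
      _ ≤ 2 * n * ∑ x ∈ (rrState L hn (Fintype.card α)).2 i, ((L i x : ℕ) - p) :=
          Nat.mul_le_mul_left _ hchain
  · -- trivial case: the interval is empty
    have : Finset.Ico p (Fintype.card α - 1) = ∅ := Finset.Ico_eq_empty (by omega)
    rw [this]
    simp

end Key

section RealPart

open Finset

/-- Abel-summation positivity. -/
lemma rrAbel (δ f : ℕ → ℝ) (N : ℕ) (hδ0 : ∀ k, k < N → 0 ≤ δ k)
    (hmono : ∀ k, k + 1 < N → δ k ≤ δ (k+1))
    (hsuf : ∀ p, 0 ≤ ∑ k ∈ Ico p N, f k) :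
    0 ≤ ∑ k ∈ range N, f k * δ k := by
  have key : ∀ d p, p + d = N → δ p * ∑ k ∈ Ico p N, f k ≤ ∑ k ∈ Ico p N, f k * δ k := by
    intro d
    induction d with
    | zero => intro p hp; rw [show p = N by omega]; simp
    | succ d ih =>
      intro p hp
      have hpN : p < N := by omega
      rw [Finset.sum_eq_sum_Ico_succ_bot hpN, Finset.sum_eq_sum_Ico_succ_bot hpN (f := fun k => f k * δ k)]
      have ihv := ih (p+1) (by omega)
      rcases Nat.lt_or_ge (p+1) N with hlt | hge
      · have h1 : δ p ≤ δ (p+1) := hmono p hlt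
        have h2 : 0 ≤ ∑ k ∈ Ico (p+1) N, f k := hsuf (p+1)
        have h3 : δ p * ∑ k ∈ Ico (p+1) N, f k ≤ δ (p+1) * ∑ k ∈ Ico (p+1) N, f k :=
          mul_le_mul_of_nonneg_right h1 h2
        nlinarith [ihv]
      · have hNp : N = p + 1 := by omega
        have hemp : Ico (p+1) N = ∅ := Finset.Ico_eq_empty (by omega)
        rw [hemp]
        simp [mul_comm]
  rcases Nat.eq_zero_or_pos N with h0 | h0
  · rw [h0]; simp
  · have h := key N 0 (by omega)
    have h2 : 0 ≤ δ 0 * ∑ k ∈ Ico 0 N, f k := mul_nonneg (hδ0 0 h0) (hsuf 0)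
    rw [Finset.range_eq_Ico]
    linarith

/-- Decomposition of a utility sum along levels. -/
lemma rrDecomp (u : α → ℝ) (a : ℕ → ℝ) (v : α → ℕ) (N : ℕ)
    (hux : ∀ x, u x = a (v x)) (hvN : ∀ x, v x ≤ N) (X : Finset α) :
    ∑ x ∈ X, u x = X.card * a 0
      + ∑ k ∈ range N, ((X.filter fun x => k < v x).card : ℝ) * (a (k+1) - a k) := by
  have hx : ∀ x, u x = a 0 + ∑ k ∈ range N, (if k < v x then a (k+1) - a k else 0) := by
    intro x
    rw [hux x]
    have h1 : ∑ k ∈ range (v x), (a (k+1) - a k) = a (v x) - a 0 := Finset.sum_range_sub a (v x)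
    have h2 : ∑ k ∈ range N, (if k < v x then a (k+1) - a k else 0)
        = ∑ k ∈ (range N).filter (fun k => k < v x), (a (k+1) - a k) :=
      (Finset.sum_filter _ _).symm
    have h3 : (range N).filter (fun k => k < v x) = range (v x) := by
      ext k
      simp only [Finset.mem_filter, Finset.mem_range]
      have := hvN x
      omega
    rw [h2, h3, h1]; ring
  calc ∑ x ∈ X, u x
      = ∑ x ∈ X, (a 0 + ∑ k ∈ range N, (if k < v x then a (k+1) - a k else 0)) :=
        Finset.sum_congr rfl (fun x _ => hx x)
    _ = X.card * a 0 + ∑ x ∈ X, ∑ k ∈ range N, (if k < v x then a (k+1) - a k else 0) := by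
        rw [Finset.sum_add_distrib, Finset.sum_const, nsmul_eq_mul]
    _ = X.card * a 0 + ∑ k ∈ range N, ((X.filter fun x => k < v x).card : ℝ) * (a (k+1) - a k) := by
        rw [Finset.sum_comm]
        congr 1
        refine Finset.sum_congr rfl (fun k _ => ?_)
        rw [← Finset.sum_filter, Finset.sum_const, nsmul_eq_mul]

/-- swapping the suffix sums of the counts. -/
lemma rrSwap (v : α → ℕ) (N p : ℕ) (hvN : ∀ x, v x ≤ N) (X : Finset α) :
    ∑ k ∈ Ico p N, (X.filter fun x => k < v x).card = ∑ x ∈ X, (v x - p) := by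
  have h1 : ∀ k, (X.filter fun x => k < v x).card = ∑ x ∈ X, (if k < v x then 1 else 0) :=
    fun k => Finset.card_filter _ _
  calc ∑ k ∈ Ico p N, (X.filter fun x => k < v x).card
      = ∑ k ∈ Ico p N, ∑ x ∈ X, (if k < v x then 1 else 0) :=
        Finset.sum_congr rfl (fun k _ => h1 k)
    _ = ∑ x ∈ X, ∑ k ∈ Ico p N, (if k < v x then 1 else 0) := Finset.sum_comm
    _ = ∑ x ∈ X, (v x - p) := by
        refine Finset.sum_congr rfl (fun x _ => ?_)
        rw [← Finset.sum_filter]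
        have h3 : (Ico p N).filter (fun k => k < v x) = Ico p (v x) := by
          ext k
          simp only [Finset.mem_filter, Finset.mem_Ico]
          have := hvN x
          omega
        rw [h3, Finset.sum_const, Nat.card_Ico, smul_eq_mul, mul_one]

lemma rrUnivFilter (L : Fin n → α ≃ Fin (Fintype.card α)) (i : Fin n) (k : ℕ)
    (hk : k < Fintype.card α) :
    (Finset.univ.filter fun x : α => k < (L i x : ℕ)).card = Fintype.card α - 1 - k := by
  have himg : Finset.image (L i) (Finset.univ.filter fun x : α => k < (L i x : ℕ))
      = Finset.univ.filter (fun j : Fin (Fintype.card α) => k < (j : ℕ)) := by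
    ext j
    simp only [Finset.mem_image, Finset.mem_filter, Finset.mem_univ, true_and]
    constructor
    · rintro ⟨x, hx, rfl⟩; exact hx
    · intro hj
      exact ⟨(L i).symm j, by simpa using hj, by simp⟩
  have hcard : (Finset.univ.filter fun x : α => k < (L i x : ℕ)).card
      = (Finset.univ.filter (fun j : Fin (Fintype.card α) => k < (j : ℕ))).card := by
    rw [← himg, Finset.card_image_of_injective _ (L i).injective]
  rw [hcard]
  have hIoi : (Finset.univ.filter (fun j : Fin (Fintype.card α) => k < (j : ℕ)))
      = Finset.Ioi (⟨k, hk⟩ : Fin (Fintype.card α)) := by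
    ext j
    simp only [Finset.mem_filter, Finset.mem_univ, true_and, Finset.mem_Ioi, Fin.lt_def]
  rw [hIoi, Fin.card_Ioi]

end RealPart


/-- if the number of items is m·n and all agents have pairwise distinct best
items, then balanced round-robin produces an NDD-proportional allocation. -/
theorem stmt8 {m : ℕ} (hn : 0 < n) (hm : 0 < m)
    (L : Fin n → α ≃ Fin (Fintype.card α))
    (hM : Fintype.card α = m * n)
    (hbest : ∃ b : Fin n → α, Function.Injective b ∧ ∀ (i : Fin n) (y : α), L i y ≤ L i (b i)) :
    ∀ i : Fin n, ∀ u : α → ℝ, (∀ x, 0 < u x) → ConsistentL (L i) u → DDL (L i) u →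
      (∑ x : α, u x) ≤ n * ∑ x ∈ (rrState L hn (Fintype.card α)).2 i, u x := by
  obtain ⟨b, hbinj, hbestL⟩ := hbest
  intro i u hpos hcons hdd
  have hM0 : 0 < Fintype.card α := by rw [hM]; positivity
  set N := Fintype.card α - 1 with hN
  set v : α → ℕ := fun x => ((L i) x : ℕ) with hv
  have hvlt : ∀ x, v x ≤ N := by
    intro x
    have := ((L i) x).isLt
    simp only [hv, hN]
    omega
  set e : ℕ → α := fun j => (L i).symm ⟨min j N, by omega⟩ with he
  set a : ℕ → ℝ := fun j => u (e j) with haf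
  have hLe : ∀ j, j ≤ N → ((L i) (e j) : ℕ) = j := by
    intro j hj
    simp only [he, Equiv.apply_symm_apply]
    exact min_eq_left hj
  have hev : ∀ x, e (v x) = x := by
    intro x
    apply (L i).injective
    apply Fin.ext
    rw [hLe (v x) (hvlt x)]
  have hux : ∀ x, u x = a (v x) := by
    intro x
    simp only [haf]
    rw [hev x]
  have hδ0 : ∀ k, k < N → 0 ≤ a (k+1) - a k := by
    intro k hk
    have hlt : (L i) (e k) < (L i) (e (k+1)) := by
      rw [Fin.lt_def]
      rw [hLe k (by omega), hLe (k+1) (by omega)]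
      omega
    have := (hcons (e (k+1)) (e k)).mpr hlt
    simp only [haf]
    linarith
  have hmono : ∀ k, k + 1 < N → a (k+1) - a k ≤ a (k+2) - a (k+1) := by
    intro k hk
    have h32 : ((L i) (e (k+2)) : ℕ) = ((L i) (e (k+1)) : ℕ) + 1 := by
      rw [hLe (k+2) (by omega), hLe (k+1) (by omega)]
    have h21 : ((L i) (e (k+1)) : ℕ) = ((L i) (e k) : ℕ) + 1 := by
      rw [hLe (k+1) (by omega), hLe k (by omega)]
    have := hdd (e k) (e (k+1)) (e (k+2)) h32 h21
    simp only [haf]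
    convert this using 2 <;> norm_num
  set X := (rrState L hn (Fintype.card α)).2 i with hX
  -- cardinality of the bundle
  have hXcard : m ≤ X.card := by
    have hc := rrCount L hn i (Fintype.card α) le_rfl
    have hre0 := rrReindex hn i (fun _ => 1) 0 m (by omega)
    rw [zero_mul, ← hM] at hre0
    have hre : ∑ s ∈ Finset.Ico 0 (Fintype.card α), (if balancedIndex n hn s = i then 1 else 0)
        = ∑ _r ∈ Finset.Ico 0 m, 1 := hre0
    rw [Finset.range_eq_Ico] at hc
    rw [hre] at hc
    simp only [Finset.sum_const, Nat.card_Ico, Nat.sub_zero, smul_eq_mul, mul_one] at hc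
    exact hc
  -- counts
  set cX : ℕ → ℕ := fun k => (X.filter fun x => k < v x).card with hcX
  -- suffix positivity
  have hsufN : ∀ p, ∑ k ∈ Finset.Ico p N, (N - k) ≤ n * ∑ k ∈ Finset.Ico p N, cX k := by
    intro p
    have hKey : 2 * ∑ k ∈ Finset.Ico p N, (N - k) ≤ 2 * n * ∑ x ∈ X, (v x - p) :=
      rrKey L hn hm hM b hbinj hbestL i p
    have hSwap : ∑ k ∈ Finset.Ico p N, cX k = ∑ x ∈ X, (v x - p) := rrSwap v N p hvlt X
    have hbr : 2 * n * (∑ x ∈ X, (v x - p)) = 2 * (n * ∑ x ∈ X, (v x - p)) := by ring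
    rw [hSwap]
    omega
  have hsuf : ∀ p, 0 ≤ ∑ k ∈ Finset.Ico p N,
      (((n * cX k : ℕ) : ℝ) - ((N - k : ℕ) : ℝ)) := by
    intro p
    rw [Finset.sum_sub_distrib, ← Nat.cast_sum, ← Nat.cast_sum, sub_nonneg, Nat.cast_le,
      ← Finset.mul_sum]
    exact hsufN p
  have habel0 := rrAbel (fun k => a (k+1) - a k)
    (fun k => ((n * cX k : ℕ) : ℝ) - ((N - k : ℕ) : ℝ)) N hδ0 hmono hsuf
  have habel : (0:ℝ) ≤ ∑ k ∈ Finset.range N,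
      ((((n * cX k : ℕ) : ℝ) - ((N - k : ℕ) : ℝ)) * (a (k+1) - a k)) := habel0
  -- decompositions
  have hdecU := rrDecomp u a v N hux hvlt Finset.univ
  have hdecX := rrDecomp u a v N hux hvlt X
  rw [Finset.card_univ] at hdecU
  have hUnivC : ∀ k ∈ Finset.range N, ((Finset.univ.filter fun x : α => k < v x).card : ℝ)
      * (a (k+1) - a k) = ((N - k : ℕ) : ℝ) * (a (k+1) - a k) := by
    intro k hk
    rw [Finset.mem_range] at hk
    congr 1
    rw [hv, rrUnivFilter L i k (by omega), hN]
  rw [Finset.sum_congr rfl hUnivC] at hdecU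
  -- final assembly
  set S1 := ∑ k ∈ Finset.range N, ((N - k : ℕ) : ℝ) * (a (k+1) - a k) with hS1
  set S2 := ∑ k ∈ Finset.range N, ((X.filter fun x => k < v x).card : ℝ) * (a (k+1) - a k) with hS2
  have habel' : S1 ≤ (n : ℝ) * S2 := by
    have hsplit : ∑ k ∈ Finset.range N, ((((n * cX k : ℕ) : ℝ) - ((N - k : ℕ) : ℝ)) * (a (k+1) - a k))
        = (n : ℝ) * S2 - S1 := by
      rw [hS1, hS2, Finset.mul_sum, ← Finset.sum_sub_distrib]
      refine Finset.sum_congr rfl (fun k _ => ?_)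
      simp only [hcX]
      push_cast
      ring
    rw [hsplit] at habel
    linarith
  have hA0 : 0 < a 0 := hpos (e 0)
  have hcardR : ((Fintype.card α : ℕ) : ℝ) ≤ (n : ℝ) * (X.card : ℝ) := by
    rw [hM]
    push_cast
    have hmX : (m : ℝ) ≤ (X.card : ℝ) := by exact_mod_cast hXcard
    calc (m:ℝ) * n = (n:ℝ) * m := by ring
    _ ≤ (n:ℝ) * (X.card:ℝ) := mul_le_mul_of_nonneg_left hmX (by positivity)
  have hterm : ((Fintype.card α : ℕ) : ℝ) * a 0 ≤ ((n : ℝ) * (X.card : ℝ)) * a 0 :=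
    mul_le_mul_of_nonneg_right hcardR hA0.le
  rw [hdecU, hdecX]
  have hexp : (n : ℝ) * ((X.card : ℝ) * a 0 + S2) = ((n:ℝ) * (X.card:ℝ)) * a 0 + (n:ℝ) * S2 := by
    ring
  rw [hexp]
  linarith
end

section
/- During the balanced round-robin procedure with n agents and M = m·n items where each agent has a different best item, after each odd round r the accumulated level-difference Σ_{k=1}^{rn}[Lev_i(x^{(i)}_{-k}) − Lev_i(y_{-k})] is at least n(n−1)/2, and after each even round r it is at least n(i−1), where x^{(i)}_{-k} are the items of the multi-bundle n·X_i(r) in decreasing rank and y_{-k} are all items in decreasing rank under ≻_i. In particular the partial sums Σ_{k=1}^{j} of level-differences are nonnegative for all j. -/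
variable {α : Type*} [Fintype α] [DecidableEq α] {n : ℕ}

/-- Sum of the j largest elements of a multiset of levels. -/
def topLevSumN (s : Multiset ℕ) (j : ℕ) : ℕ := ((s.sort (· ≥ ·)).take j).sum

/-! ### Auxiliary lemmas about sums of largest elements -/

lemma list_take_sum_mono (a : ℕ) (l : List ℕ) (ha : ∀ x ∈ l, x ≤ a) (j : ℕ) :
    (l.take j).sum ≤ ((a :: l).take j).sum := by
  cases j with
  | zero => simp
  | succ j' =>
    simp only [List.take_succ_cons]
    rw [List.take_succ]
    simp only [List.sum_append]
    rcases h : l[j']? with _ | x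
    · simp [h]
    · have hx : x ∈ l := by
        have := List.mem_of_getElem? h
        exact this
      have := ha x hx
      simp [h, Option.toList]
      omega

lemma listA : ∀ (l : List ℕ), l.Pairwise (· ≥ ·) → ∀ t : Multiset ℕ, t ≤ ↑l →
    t.sum ≤ (l.take (Multiset.card t)).sum := by
  intro l
  induction l with
  | nil =>
    intro _ t ht
    simp only [Multiset.coe_nil, Multiset.le_zero] at ht
    simp [ht]
  | cons a l ih =>
    intro hs t ht
    have hs' : l.Pairwise (· ≥ ·) := hs.of_cons
    by_cases ha : a ∈ t
    · obtain ⟨t', rfl⟩ : ∃ t', t = a ::ₘ t' := ⟨t.erase a, (Multiset.cons_erase ha).symm⟩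
      have ht' : t' ≤ ↑l := by
        have := Multiset.erase_le_erase a ht
        simpa using this
      have := ih hs' t' ht'
      simp only [Multiset.sum_cons, Multiset.card_cons, List.take_succ_cons, List.sum_cons]
      omega
    · have ht' : t ≤ ↑l := by
        rw [Multiset.le_iff_count] at ht ⊢
        intro x
        have := ht x
        rcases eq_or_ne x a with rfl | hxa
        · simp [Multiset.count_eq_zero_of_notMem ha]
        · simpa [Multiset.count_cons, List.count_cons, hxa, hxa.symm] using this
      calc t.sum ≤ (l.take (Multiset.card t)).sum := ih hs' t ht'
        _ ≤ ((a :: l).take (Multiset.card t)).sum := by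
            apply list_take_sum_mono
            intro x hx
            exact List.rel_of_pairwise_cons hs (by simpa using hx)

lemma lemA (s t : Multiset ℕ) (h : t ≤ s) : t.sum ≤ topLevSumN s (Multiset.card t) := by
  have h1 : ((s.sort (· ≥ ·) : List ℕ) : Multiset ℕ) = s := s.sort_eq _
  have h2 : (s.sort (· ≥ ·)).Pairwise (· ≥ ·) := s.pairwise_sort _
  exact listA _ h2 t (by rw [h1]; exact h)

lemma topLevSumN_card (s : Multiset ℕ) : topLevSumN s (Multiset.card s) = s.sum := by
  unfold topLevSumN
  rw [List.take_of_length_le (by simp), ← Multiset.sum_coe, Multiset.sort_eq]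

/-! ### Structural lemmas about the round-robin procedure -/

section RR

variable (L : Fin n → α ≃ Fin (Fintype.card α)) (hn : 0 < n)

lemma rr_step (t : ℕ) (h : ((rrState L hn t).1).Nonempty) :
    ∃ x ∈ (rrState L hn t).1,
      (∀ y ∈ (rrState L hn t).1, L (balancedIndex n hn t) y ≤ L (balancedIndex n hn t) x) ∧
      rrState L hn (t + 1) =
        ((rrState L hn t).1.erase x,
         Function.update (rrState L hn t).2 (balancedIndex n hn t)
           (insert x ((rrState L hn t).2 (balancedIndex n hn t)))) := by
  set i := balancedIndex n hn t
  set M := ((rrState L hn t).1.image (L i)).max' (h.image _) with hMdef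
  refine ⟨(L i).symm M, ?_, ?_, ?_⟩
  · have hM : M ∈ (rrState L hn t).1.image (L i) := Finset.max'_mem _ _
    obtain ⟨a, ha, hEq⟩ := Finset.mem_image.mp hM
    rw [← hEq]
    simpa using ha
  · intro y hy
    have : L i y ∈ (rrState L hn t).1.image (L i) := Finset.mem_image_of_mem _ hy
    have := Finset.le_max' _ _ this
    simpa using this
  · conv_lhs => rw [rrState]
    simp only [dif_pos h]
    rfl

lemma rr_card :
    ∀ t ≤ Fintype.card α, (rrState L hn t).1.card = Fintype.card α - t := by
  intro t
  induction t with
  | zero => simp [rrState]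
  | succ t ih =>
    intro ht
    have ht' : t ≤ Fintype.card α := le_of_lt (Nat.lt_of_succ_le ht)
    have hc := ih ht'
    have hne : ((rrState L hn t).1).Nonempty := by
      rw [← Finset.card_pos, hc]; omega
    obtain ⟨x, hx, _, hstep⟩ := rr_step L hn t hne
    rw [hstep]
    simp only
    rw [Finset.card_erase_of_mem hx, hc]
    omega

lemma rr_nonempty (t : ℕ) (ht : t < Fintype.card α) :
    ((rrState L hn t).1).Nonempty := by
  rw [← Finset.card_pos, rr_card L hn t (le_of_lt ht)]
  omega

/-- bundles are disjoint from remaining items -/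
lemma rr_disj : ∀ t (j : Fin n) (x : α), x ∈ (rrState L hn t).2 j → x ∉ (rrState L hn t).1 := by
  intro t
  induction t with
  | zero => simp [rrState]
  | succ t ih =>
    intro j x hx
    by_cases hne : ((rrState L hn t).1).Nonempty
    · obtain ⟨y, hy, _, hstep⟩ := rr_step L hn t hne
      rw [hstep] at hx ⊢
      simp only at hx ⊢
      intro hmem
      have hx1 : x ∈ (rrState L hn t).1 := Finset.mem_of_mem_erase hmem
      have hxy : x ≠ y := Finset.ne_of_mem_erase hmem
      rcases eq_or_ne (balancedIndex n hn t) j with hij | hij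
      · rw [hij, Function.update_self] at hx
        rcases Finset.mem_insert.mp hx with h1 | h1
        · exact hxy h1
        · exact ih j x h1 hx1
      · rw [Function.update_of_ne hij.symm] at hx
        exact ih j x hx hx1
    · have : rrState L hn (t+1) = rrState L hn t := by
        conv_lhs => rw [rrState]
        simp only [dif_neg hne]
      rw [this] at hx ⊢
      exact ih j x hx

/-- bundles are monotone in time -/
lemma rr_mono (j : Fin n) : ∀ t t', t ≤ t' → (rrState L hn t).2 j ⊆ (rrState L hn t').2 j := by
  intro t t' h
  induction t' with
  | zero => have : t = 0 := Nat.le_zero.mp h; rw [this]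
  | succ t' ih =>
    rcases Nat.lt_or_ge t (t'+1) with h1 | h1
    · have hsub : (rrState L hn t').2 j ⊆ (rrState L hn (t'+1)).2 j := by
        by_cases hne : ((rrState L hn t').1).Nonempty
        · obtain ⟨y, hy, _, hstep⟩ := rr_step L hn t' hne
          rw [hstep]
          simp only
          rcases eq_or_ne (balancedIndex n hn t') j with hij | hij
          · rw [hij, Function.update_self]; exact Finset.subset_insert _ _
          · rw [Function.update_of_ne hij.symm]
        · conv_rhs => rw [rrState]
          simp only [dif_neg hne]
          exact Finset.Subset.refl _
      exact (ih (Nat.lt_succ_iff.mp h1)).trans hsub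
    · have : t = t' + 1 := le_antisymm h h1
      rw [this]

end RR

/-- time at which agent i picks in round c (rounds 0-indexed) -/
def tpk (n i c : ℕ) : ℕ := c * n + (if c % 2 = 0 then i else n - 1 - i)

lemma bI_eq (hn : 0 < n) (i : Fin n) (u : ℕ) :
    balancedIndex n hn u = i ↔ u % n = (if (u / n) % 2 = 0 then (i : ℕ) else n - 1 - i) := by
  have hu : u % n < n := Nat.mod_lt u hn
  have hi : (i : ℕ) < n := i.isLt
  unfold balancedIndex
  split
  · simp only [Fin.ext_iff]
  · simp only [Fin.ext_iff]
    constructor <;> intro <;> omega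

lemma tpk_lt (hn : 0 < n) (i : Fin n) (c : ℕ) :
    c * n ≤ tpk n (i : ℕ) c ∧ tpk n (i : ℕ) c < (c + 1) * n := by
  have hi : (i : ℕ) < n := i.isLt
  have hcn : (c + 1) * n = c * n + n := by ring
  unfold tpk
  split <;> omega

lemma bI_eq_tpk (hn : 0 < n) (i : Fin n) (c : ℕ) (u : ℕ)
    (h1 : c * n ≤ u) (h2 : u < (c+1) * n) :
    balancedIndex n hn u = i ↔ u = tpk n (i : ℕ) c := by
  have hi : (i : ℕ) < n := i.isLt
  have hcn : (c + 1) * n = c * n + n := by ring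
  have hdiv : u / n = c := Nat.div_eq_of_lt_le h1 h2
  have hmod : u % n + c * n = u := by
    have h := Nat.mod_add_div u n
    rw [hdiv, Nat.mul_comm] at h
    exact h
  rw [bI_eq hn i u, hdiv]
  unfold tpk
  split <;> omega

lemma rr_const (L : Fin n → α ≃ Fin (Fintype.card α)) (hn : 0 < n) (i : Fin n) :
    ∀ s t, s ≤ t → (∀ u, s ≤ u → u < t → balancedIndex n hn u ≠ i) →
    (rrState L hn t).2 i = (rrState L hn s).2 i := by
  intro s t hst
  induction t with
  | zero => intro _; have : s = 0 := Nat.le_zero.mp hst; rw [this]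
  | succ t ih =>
    intro hno
    rcases Nat.lt_or_ge s (t+1) with h1 | h1
    · have hs : s ≤ t := Nat.lt_succ_iff.mp h1
      have step : (rrState L hn (t+1)).2 i = (rrState L hn t).2 i := by
        by_cases hne : ((rrState L hn t).1).Nonempty
        · obtain ⟨y, hy, _, hstep⟩ := rr_step L hn t hne
          rw [hstep]
          simp only
          rw [Function.update_of_ne]
          exact fun hEq => hno t hs (Nat.lt_succ_self t) hEq.symm
        · conv_lhs => rw [rrState]
          simp only [dif_neg hne]
      rw [step]
      exact ih hs (fun u hu1 hu2 => hno u hu1 (Nat.lt_succ_of_lt hu2))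
    · have : s = t + 1 := le_antisymm hst h1
      rw [this]

lemma rr_pick_level (L : Fin n → α ≃ Fin (Fintype.card α)) (hn : 0 < n) (t : ℕ)
    (ht : t < Fintype.card α) (x : α) (hx : x ∈ (rrState L hn t).1)
    (hmax : ∀ y ∈ (rrState L hn t).1, L (balancedIndex n hn t) y ≤ L (balancedIndex n hn t) x) :
    Fintype.card α ≤ ((L (balancedIndex n hn t) x : ℕ) + 1) + t := by
  set j := balancedIndex n hn t
  have hcard : (rrState L hn t).1.card = Fintype.card α - t := rr_card L hn t (le_of_lt ht)
  have himg : ((rrState L hn t).1.image (fun y => (L j y : ℕ))).card = Fintype.card α - t := by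
    rw [Finset.card_image_of_injective _ (fun a b hab => (L j).injective (Fin.val_injective hab)), hcard]
  have hsub : (rrState L hn t).1.image (fun y => (L j y : ℕ)) ⊆ Finset.range ((L j x : ℕ) + 1) := by
    intro v hv
    obtain ⟨y, hy, rfl⟩ := Finset.mem_image.mp hv
    have := hmax y hy
    simp only [Finset.mem_range]
    exact Nat.lt_succ_of_le this
  have := Finset.card_le_card hsub
  rw [himg, Finset.card_range] at this
  omega

lemma rr_round (L : Fin n → α ≃ Fin (Fintype.card α)) (hn : 0 < n) (i : Fin n) (c : ℕ)
    (hc : (c + 1) * n ≤ Fintype.card α) :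
    ∃ x, x ∉ (rrState L hn (c * n)).2 i ∧
      x ∈ (rrState L hn (tpk n (i : ℕ) c)).1 ∧
      (∀ y ∈ (rrState L hn (tpk n (i : ℕ) c)).1, L i y ≤ L i x) ∧
      Fintype.card α ≤ ((L i x : ℕ) + 1) + tpk n (i : ℕ) c ∧
      (rrState L hn ((c + 1) * n)).2 i = insert x ((rrState L hn (c * n)).2 i) := by
  obtain ⟨hle, hlt⟩ := tpk_lt hn i c
  set t0 := tpk n (i : ℕ) c with ht0
  have ht0M : t0 < Fintype.card α := lt_of_lt_of_le hlt hc
  have hne : ((rrState L hn t0).1).Nonempty := rr_nonempty L hn t0 ht0M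
  obtain ⟨x, hx, hmax, hstep⟩ := rr_step L hn t0 hne
  have hbI : balancedIndex n hn t0 = i := (bI_eq_tpk hn i c t0 hle hlt).mpr rfl
  have hpl := rr_pick_level L hn t0 ht0M x hx hmax
  rw [hbI] at hmax hstep hpl
  have heq1 : (rrState L hn t0).2 i = (rrState L hn (c * n)).2 i := by
    apply rr_const L hn i (c * n) t0 hle
    intro u hu1 hu2 hbu
    have := (bI_eq_tpk hn i c u hu1 (lt_trans hu2 hlt)).mp hbu
    omega
  have heq2 : (rrState L hn (t0 + 1)).2 i = insert x ((rrState L hn (c * n)).2 i) := by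
    rw [hstep]
    simp only
    rw [Function.update_self, heq1]
  have heq3 : (rrState L hn ((c + 1) * n)).2 i = (rrState L hn (t0 + 1)).2 i := by
    apply rr_const L hn i (t0 + 1) ((c + 1) * n) (by omega)
    intro u hu1 hu2 hbu
    have := (bI_eq_tpk hn i c u (by omega) hu2).mp hbu
    omega
  refine ⟨x, ?_, hx, hmax, hpl, by rw [heq3, heq2]⟩
  rw [← heq1]
  exact fun hmem => rr_disj L hn t0 i x hmem hx

lemma rr_first_remaining (L : Fin n → α ≃ Fin (Fintype.card α)) (hn : 0 < n)
    (b : Fin n → α) (hbinj : Function.Injective b)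
    (hb : ∀ (i : Fin n) (y : α), L i y ≤ L i (b i)) (hnM : n ≤ Fintype.card α) :
    ∀ t ≤ n, ∀ j : Fin n, t ≤ (j : ℕ) → b j ∈ (rrState L hn t).1 := by
  intro t
  induction t with
  | zero => intro _ j _; simp [rrState]
  | succ t ih =>
    intro ht j hj
    have htn : t < n := lt_of_lt_of_le (Nat.lt_of_succ_le ht) (le_refl n)
    have htM : t < Fintype.card α := lt_of_lt_of_le htn hnM
    have hne := rr_nonempty L hn t htM
    obtain ⟨x, hx, hmax, hstep⟩ := rr_step L hn t hne
    have hbIt : balancedIndex n hn t = ⟨t, htn⟩ := by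
      unfold balancedIndex
      rw [Nat.div_eq_of_lt htn]
      simp [Nat.mod_eq_of_lt htn]
    have hbt : b ⟨t, htn⟩ ∈ (rrState L hn t).1 := ih (by omega) ⟨t, htn⟩ (le_refl t)
    have hxb : x = b ⟨t, htn⟩ := by
      have h1 : L ⟨t, htn⟩ x ≤ L ⟨t, htn⟩ (b ⟨t, htn⟩) := hb _ x
      have h2 : L ⟨t, htn⟩ (b ⟨t, htn⟩) ≤ L ⟨t, htn⟩ x := by
        have := hmax (b ⟨t, htn⟩) hbt
        rwa [hbIt] at this
      exact (L ⟨t, htn⟩).injective (le_antisymm h1 h2)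
    rw [hstep]
    simp only
    apply Finset.mem_erase_of_ne_of_mem
    · rw [hxb]
      intro hEq
      have h2 : (j : ℕ) = t := by simpa using congrArg Fin.val (hbinj hEq)
      omega
    · exact ih (by omega) j (by omega)

/-! ### Arithmetic lemmas -/

/-- lower bound for the level-sum of agent i's bundle after k rounds -/
noncomputable def LBz (M n i : ℕ) (k : ℕ) : ℤ :=
  (k : ℤ) * M - ∑ u ∈ Finset.Ico 1 k, (tpk n i u : ℤ)

/-- target: sum of the j largest levels overall -/
def Tz (M : ℕ) (j : ℕ) : ℤ := ∑ u ∈ Finset.range j, ((M : ℤ) - u)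

lemma consec_nonneg (x : ℤ) (hx : 0 ≤ x) : 0 ≤ x * (x - 1) := by
  rcases hx.lt_or_eq with h | h
  · nlinarith
  · simp [← h]

lemma Tz_closed (M : ℕ) : ∀ j : ℕ, 2 * Tz M j = 2 * j * M - j * (j - 1 : ℤ) := by
  intro j
  induction j with
  | zero => simp [Tz]
  | succ j ih =>
    unfold Tz at ih ⊢
    rw [Finset.sum_range_succ]
    push_cast
    push_cast at ih
    linarith

lemma tpk_cast_even (n i u : ℕ) (hu : u % 2 = 0) : ((tpk n i u : ℕ) : ℤ) = u * n + i := by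
  unfold tpk
  rw [if_pos hu]
  push_cast
  ring

lemma tpk_cast_odd (n i u : ℕ) (hu : u % 2 = 1) (hi : i < n) :
    ((tpk n i u : ℕ) : ℤ) = u * n + n - 1 - i := by
  unfold tpk
  rw [if_neg (by omega)]
  have h1 : n - 1 - i = n - (1 + i) := by omega
  rw [h1]
  push_cast [Nat.cast_sub (by omega : 1 + i ≤ n)]
  ring

lemma Sp_odd (n i : ℕ) (hi : i < n) :
    ∀ a : ℕ, (∑ u ∈ Finset.Ico 1 (2 * a + 1), (tpk n i u : ℤ)) = 2 * n * a * (a + 1) - a := by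
  intro a
  induction a with
  | zero => simp
  | succ a ih =>
    have h1 : 2 * (a + 1) + 1 = (2 * a + 2) + 1 := by ring
    rw [h1, Finset.sum_Ico_succ_top (by omega), Finset.sum_Ico_succ_top (by omega), ih]
    rw [tpk_cast_odd n i (2 * a + 1) (by omega) hi, tpk_cast_even n i (2 * a + 2) (by omega)]
    push_cast
    ring

lemma Sp_even (n i : ℕ) (hi : i < n) (a : ℕ) :
    (∑ u ∈ Finset.Ico 1 (2 * a + 2), (tpk n i u : ℤ)) =
      2 * n * a * (a + 1) + (2 * a + 2) * n - a - 1 - i := by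
  rw [Finset.sum_Ico_succ_top (by omega), Sp_odd n i hi a,
    tpk_cast_odd n i (2 * a + 1) (by omega) hi]
  push_cast
  ring

lemma LBz_zero (M n i : ℕ) : LBz M n i 0 = 0 := by simp [LBz]

lemma LBz_one (M n i : ℕ) : LBz M n i 1 = M := by simp [LBz]

lemma G_odd (M n i : ℕ) (hi : i < n) (a : ℕ) :
    2 * ((n : ℤ) * LBz M n i (2 * a + 1) - Tz M ((2 * a + 1) * n)) = n * (n - 1) := by
  have hT := Tz_closed M ((2 * a + 1) * n)
  unfold LBz
  rw [Sp_odd n i hi a]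
  push_cast at hT ⊢
  linear_combination (-1 : ℤ) * hT

lemma G_even (M n i : ℕ) (hi : i < n) (a : ℕ) :
    2 * ((n : ℤ) * LBz M n i (2 * a + 2) - Tz M ((2 * a + 2) * n)) = 2 * n * i := by
  have hT := Tz_closed M ((2 * a + 2) * n)
  unfold LBz
  rw [Sp_even n i hi a]
  push_cast at hT ⊢
  linear_combination (-1 : ℤ) * hT

/-- key interior inequality -/
lemma AR (M n i : ℕ) (hi : i < n) (k' q : ℕ) (hq1 : 1 ≤ q) (hqn : q ≤ n) :
    Tz M (k' * n + q) ≤ ((n : ℤ) - q) * LBz M n i k' + (q : ℤ) * LBz M n i (k' + 1) := by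
  have hT1 := Tz_closed M (k' * n + q)
  rcases Nat.eq_zero_or_pos k' with rfl | hk'
  · rw [LBz_zero, LBz_one]
    have hq : (0 : ℤ) ≤ (q : ℤ) * ((q : ℤ) - 1) := consec_nonneg _ (by positivity)
    push_cast at hT1 ⊢
    nlinarith
  · rcases Nat.even_or_odd k' with hpar | hpar
    · obtain ⟨a, ha⟩ : ∃ a, k' = 2 * a + 2 := by
        obtain ⟨c, hc⟩ := hpar; exact ⟨c - 1, by omega⟩
      subst ha
      have hG := G_even M n i hi a
      have hd : LBz M n i (2 * a + 2 + 1) = LBz M n i (2 * a + 2) + ((M : ℤ) - tpk n i (2 * a + 2)) := by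
        unfold LBz
        rw [Finset.sum_Ico_succ_top (by omega)]
        push_cast
        ring
      rw [hd, tpk_cast_even n i (2 * a + 2) (by omega)]
      have hT2 := Tz_closed M ((2 * a + 2) * n)
      have h1 : (0 : ℤ) ≤ (q : ℤ) * ((q : ℤ) - 1) := consec_nonneg _ (by positivity)
      have h2 : (0 : ℤ) ≤ (i : ℤ) * ((n : ℤ) - q) := by
        apply mul_nonneg (by positivity)
        have : (q : ℤ) ≤ n := by exact_mod_cast hqn
        linarith
      push_cast at hT1 hT2 hG ⊢
      nlinarith
    · obtain ⟨a, ha⟩ := hpar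
      subst ha
      have hG := G_odd M n i hi a
      have hd : LBz M n i (2 * a + 1 + 1) = LBz M n i (2 * a + 1) + ((M : ℤ) - tpk n i (2 * a + 1)) := by
        unfold LBz
        rw [Finset.sum_Ico_succ_top (by omega)]
        push_cast
        ring
      rw [hd, tpk_cast_odd n i (2 * a + 1) (by omega) hi]
      have hT2 := Tz_closed M ((2 * a + 1) * n)
      have h1 : (0 : ℤ) ≤ ((n : ℤ) - q) * ((n : ℤ) - q - 1) := by
        apply consec_nonneg
        have : (q : ℤ) ≤ n := by exact_mod_cast hqn
        linarith
      have h2 : (0 : ℤ) ≤ (q : ℤ) * i := by positivity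
      push_cast at hT1 hT2 hG ⊢
      nlinarith

/-- the level multiset of agent i's bundle after k rounds -/
def mBd (L : Fin n → α ≃ Fin (Fintype.card α)) (hn : 0 < n) (i : Fin n) (k : ℕ) :
    Multiset ℕ := ((rrState L hn (k * n)).2 i).val.map (fun x => (L i x : ℕ) + 1)

/-- invariant of balanced round-robin. After round r, for agent i, all the
partial sums of level-differences between the multi-bundle n·X_i(r) (sorted decreasingly)
and the whole item set (sorted decreasingly) are nonnegative; moreover the accumulated
level-difference after round r is at least n(n-1)/2 when r is odd and at least n·i
(agents indexed 0,…,n-1) when r is even. -/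
theorem stmt9 {m : ℕ} (hn : 0 < n) (hm : 0 < m)
    (L : Fin n → α ≃ Fin (Fintype.card α))
    (hM : Fintype.card α = m * n)
    (hbest : ∃ b : Fin n → α, Function.Injective b ∧ ∀ (i : Fin n) (y : α), L i y ≤ L i (b i))
    (i : Fin n) (r : ℕ) (hr1 : 1 ≤ r) (hrm : r ≤ m) :
    ∀ s : Multiset ℕ,
      s = n • (((rrState L hn (r * n)).2 i).val.map (fun x => (L i x : ℕ) + 1)) →
      ((∀ j ≤ r * n,
          (∑ k ∈ Finset.range j, (Fintype.card α - k)) ≤ topLevSumN s j) ∧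
       (r % 2 = 1 →
          ((n * (n - 1) / 2 : ℕ) : ℤ) ≤
            (topLevSumN s (r * n) : ℤ) -
              ∑ k ∈ Finset.range (r * n), ((Fintype.card α : ℤ) - (k : ℤ))) ∧
       (r % 2 = 0 →
          ((n : ℤ) * (i : ℕ)) ≤
            (topLevSumN s (r * n) : ℤ) -
              ∑ k ∈ Finset.range (r * n), ((Fintype.card α : ℤ) - (k : ℤ)))) := by
  obtain ⟨b, hbinj, hb⟩ := hbest
  intro s hs
  have hsg : s = n • mBd L hn i r := hs
  have hnM : n ≤ Fintype.card α := by
    rw [hM]; exact Nat.le_mul_of_pos_left n hm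
  have hMpos : 0 < Fintype.card α := lt_of_lt_of_le hn hnM
  -- cumulative bundle facts
  have cumul : ∀ k, k ≤ r →
      Multiset.card (mBd L hn i k) = k ∧
        LBz (Fintype.card α) n (i : ℕ) k ≤ ((mBd L hn i k).sum : ℤ) := by
    intro k
    induction k with
    | zero =>
      intro _
      constructor
      · simp [mBd, rrState]
      · simp [mBd, rrState, LBz_zero]
    | succ k ih =>
      intro hk
      have hc : (k + 1) * n ≤ Fintype.card α := by
        rw [hM]; exact Nat.mul_le_mul_right n (le_trans hk hrm)
      obtain ⟨x, hxnm, hxrem, hmax, hlev, hins⟩ := rr_round L hn i k hc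
      obtain ⟨hcard, hsum⟩ := ih (by omega)
      have hmBsucc : mBd L hn i (k + 1) = ((L i x : ℕ) + 1) ::ₘ mBd L hn i k := by
        unfold mBd
        rw [hins, Finset.insert_val_of_notMem hxnm, Multiset.map_cons]
      constructor
      · rw [hmBsucc, Multiset.card_cons, hcard]
      · rw [hmBsucc, Multiset.sum_cons]
        rcases Nat.eq_zero_or_pos k with rfl | hkpos
        · -- first round: agent i gets an item of top level M
          rw [LBz_one]
          have htpk0 : tpk n (i : ℕ) 0 = (i : ℕ) := by unfold tpk; simp
          have hbi : b i ∈ (rrState L hn (tpk n (i : ℕ) 0)).1 := by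
            rw [htpk0]
            exact rr_first_remaining L hn b hbinj hb hnM (i : ℕ) (le_of_lt i.isLt) i (le_refl _)
          have h1 : L i (b i) ≤ L i x := hmax (b i) hbi
          have h2 : Fintype.card α - 1 ≤ (L i (b i) : ℕ) := by
            have h3 := hb i ((L i).symm ⟨Fintype.card α - 1, by omega⟩)
            have h4 : (L i ((L i).symm ⟨Fintype.card α - 1, by omega⟩) : ℕ) =
                Fintype.card α - 1 := by simp
            rw [Fin.le_def, h4] at h3
            exact h3
          have h5 : Fintype.card α ≤ (L i x : ℕ) + 1 := by
            have h6 := Fin.le_def.mp h1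
            omega
          have hz : mBd L hn i 0 = 0 := by simp [mBd, rrState]
          rw [hz]
          simp only [Multiset.sum_zero, Nat.cast_add, Nat.cast_zero, add_zero]
          exact_mod_cast h5
        · have hd : LBz (Fintype.card α) n (i : ℕ) (k + 1) =
              LBz (Fintype.card α) n (i : ℕ) k + ((Fintype.card α : ℤ) - tpk n (i : ℕ) k) := by
            unfold LBz
            rw [Finset.sum_Ico_succ_top (by omega)]
            push_cast
            ring
          rw [hd]
          have h3 : ((Fintype.card α : ℕ) : ℤ) ≤ ((L i x : ℕ) + 1 : ℤ) + (tpk n (i : ℕ) k : ℤ) := by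
            exact_mod_cast hlev
          push_cast
          push_cast at hsum h3
          linarith
  -- cardinality and total sum of s
  have hcards : Multiset.card s = r * n := by
    rw [hsg, Multiset.card_nsmul, (cumul r (le_refl r)).1]
    ring
  have hsum_s : (s.sum : ℤ) = (n : ℤ) * ((mBd L hn i r).sum : ℤ) := by
    have : s.sum = n * (mBd L hn i r).sum := by
      rw [hsg, Multiset.sum_nsmul, smul_eq_mul]
    rw [this]
    push_cast
    ring
  have htop_full : (topLevSumN s (r * n) : ℤ) = (s.sum : ℤ) := by
    rw [← hcards, topLevSumN_card]
  have hSr := (cumul r (le_refl r)).2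
  refine ⟨?_, ?_, ?_⟩
  · -- partial sums
    intro j hj
    rcases Nat.eq_zero_or_pos j with rfl | hjpos
    · simp [topLevSumN]
    · obtain ⟨k', q, hjeq, hq1, hqn⟩ : ∃ k' q, j = k' * n + q ∧ 1 ≤ q ∧ q ≤ n := by
        refine ⟨(j - 1) / n, (j - 1) % n + 1, ?_, ?_, ?_⟩
        · have hdm := Nat.div_add_mod (j - 1) n
          have hcm : n * ((j - 1) / n) = ((j - 1) / n) * n := Nat.mul_comm _ _
          omega
        · omega
        · have := Nat.mod_lt (j - 1) hn
          omega
      have hk'r : k' + 1 ≤ r := by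
        by_contra hcon
        have h2 : r * n ≤ k' * n := Nat.mul_le_mul_right n (by omega)
        omega
      obtain ⟨hck', hsk'⟩ := cumul k' (by omega)
      obtain ⟨hck1, hsk1⟩ := cumul (k' + 1) hk'r
      set w : Multiset ℕ := (n - q) • mBd L hn i k' + q • mBd L hn i (k' + 1) with hw
      have hsub1 : mBd L hn i k' ≤ mBd L hn i r := by
        apply Multiset.map_le_map
        rw [Finset.val_le_iff]
        exact rr_mono L hn i (k' * n) (r * n) (Nat.mul_le_mul_right n (by omega))
      have hsub2 : mBd L hn i (k' + 1) ≤ mBd L hn i r := by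
        apply Multiset.map_le_map
        rw [Finset.val_le_iff]
        exact rr_mono L hn i ((k' + 1) * n) (r * n) (Nat.mul_le_mul_right n hk'r)
      have hwle : w ≤ s := by
        rw [hw, hsg]
        calc (n - q) • mBd L hn i k' + q • mBd L hn i (k' + 1)
            ≤ (n - q) • mBd L hn i r + q • mBd L hn i r :=
              add_le_add (nsmul_le_nsmul_right hsub1 _) (nsmul_le_nsmul_right hsub2 _)
          _ = n • mBd L hn i r := by rw [← add_nsmul, Nat.sub_add_cancel hqn]
      have hwcard : Multiset.card w = j := by
        rw [hw, Multiset.card_add, Multiset.card_nsmul, Multiset.card_nsmul, hck', hck1, hjeq]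
        zify [hqn]
        ring
      have hnq : ((n - q : ℕ) : ℤ) = (n : ℤ) - q := by
        push_cast [Nat.cast_sub hqn]; ring
      have hwsum : ((n : ℤ) - q) * LBz (Fintype.card α) n (i : ℕ) k' +
          (q : ℤ) * LBz (Fintype.card α) n (i : ℕ) (k' + 1) ≤ (w.sum : ℤ) := by
        have hws : (w.sum : ℤ) = ((n - q : ℕ) : ℤ) * ((mBd L hn i k').sum : ℤ) +
            (q : ℤ) * ((mBd L hn i (k' + 1)).sum : ℤ) := by
          have : w.sum = (n - q) * (mBd L hn i k').sum + q * (mBd L hn i (k' + 1)).sum := by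
            rw [hw, Multiset.sum_add, Multiset.sum_nsmul, Multiset.sum_nsmul,
              smul_eq_mul, smul_eq_mul]
          rw [this]
          push_cast
          ring
        rw [hws, hnq]
        have c1 : (0 : ℤ) ≤ (n : ℤ) - q := by
          have : (q : ℤ) ≤ n := by exact_mod_cast hqn
          linarith
        exact add_le_add (mul_le_mul_of_nonneg_left hsk' c1)
          (mul_le_mul_of_nonneg_left hsk1 (by positivity))
      have hAR := AR (Fintype.card α) n (i : ℕ) i.isLt k' q hq1 hqn
      have htopw : (w.sum : ℤ) ≤ (topLevSumN s j : ℤ) := by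
        have := lemA s w hwle
        rw [hwcard] at this
        exact_mod_cast this
      have hcast : ((∑ k ∈ Finset.range j, (Fintype.card α - k) : ℕ) : ℤ) =
          Tz (Fintype.card α) j := by
        rw [Nat.cast_sum]
        apply Finset.sum_congr rfl
        intro u hu
        have hu' : u < j := Finset.mem_range.mp hu
        have huM : u ≤ Fintype.card α := by
          have hjM : j ≤ Fintype.card α := by
            rw [hM]
            exact le_trans hj (Nat.mul_le_mul_right n hrm)
          omega
        rw [Nat.cast_sub huM]
      have hfin : ((∑ k ∈ Finset.range j, (Fintype.card α - k) : ℕ) : ℤ) ≤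
          (topLevSumN s j : ℤ) := by
        rw [hcast, hjeq]
        calc Tz (Fintype.card α) (k' * n + q) ≤ _ := hAR
          _ ≤ (w.sum : ℤ) := hwsum
          _ ≤ _ := by rw [← hjeq]; exact htopw
      exact_mod_cast hfin
  · -- odd rounds
    intro hodd
    obtain ⟨a, rfl⟩ : ∃ a, r = 2 * a + 1 := ⟨r / 2, by omega⟩
    have hG := G_odd (Fintype.card α) n (i : ℕ) i.isLt a
    have hdvd : 2 ∣ n * (n - 1) := by
      rcases Nat.even_or_odd n with h | h
      · exact Dvd.dvd.mul_right h.two_dvd _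
      · have h2 : Even (n - 1) := by
          obtain ⟨c, hc⟩ := h
          exact ⟨c, by omega⟩
        exact Dvd.dvd.mul_left h2.two_dvd _
    have hhalf : ((n * (n - 1) / 2 : ℕ) : ℤ) * 2 = (n : ℤ) * ((n : ℤ) - 1) := by
      have hc2 : (n * (n - 1) / 2) * 2 = n * (n - 1) := Nat.div_mul_cancel hdvd
      have hc3 : ((n * (n - 1) / 2 : ℕ) : ℤ) * 2 = ((n * (n - 1) : ℕ) : ℤ) := by
        exact_mod_cast congrArg (Nat.cast : ℕ → ℤ) hc2
      rw [hc3]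
      push_cast [Nat.cast_sub (by omega : 1 ≤ n)]
      ring
    rw [htop_full, hsum_s]
    have h1 : (n : ℤ) * LBz (Fintype.card α) n (i : ℕ) (2 * a + 1) ≤
        (n : ℤ) * ((mBd L hn i (2 * a + 1)).sum : ℤ) :=
      mul_le_mul_of_nonneg_left hSr (by positivity)
    have hTz : (∑ k ∈ Finset.range ((2 * a + 1) * n), ((Fintype.card α : ℤ) - (k : ℤ))) =
        Tz (Fintype.card α) ((2 * a + 1) * n) := rfl
    rw [hTz]
    linarith
  · -- even rounds
    intro heven
    obtain ⟨a, rfl⟩ : ∃ a, r = 2 * a + 2 := ⟨r / 2 - 1, by omega⟩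
    have hG := G_even (Fintype.card α) n (i : ℕ) i.isLt a
    rw [htop_full, hsum_s]
    have h1 : (n : ℤ) * LBz (Fintype.card α) n (i : ℕ) (2 * a + 2) ≤
        (n : ℤ) * ((mBd L hn i (2 * a + 2)).sum : ℤ) :=
      mul_le_mul_of_nonneg_left hSr (by positivity)
    have hTz : (∑ k ∈ Finset.range ((2 * a + 2) * n), ((Fintype.card α : ℤ) - (k : ℤ))) =
        Tz (Fintype.card α) ((2 * a + 2) * n) := rfl
    rw [hTz]
    linarith
end

section
/- For a strict ranking ≻ with reverse ranking ≻ʳ and any two multisets X, Y of items: (u(X) ≥ u(Y) for all additive ID utility functions u consistent with ≻) if and only if (v(Y) ≥ v(X) for all additive DD utility functions v consistent with ≻ʳ). -/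
variable {α : Type*} [Fintype α] [LinearOrder α]

/-- Borda level w.r.t. the reverse ranking ≻ʳ (y ≻ʳ x iff x ≻ y). -/
def levR (x : α) : ℕ := (Finset.univ.filter (x ≤ ·)).card

/-- `v` is consistent with the reverse ranking ≻ʳ : `v x > v y` iff `y ≻ x`. -/
def ConsistentR (v : α → ℝ) : Prop := ∀ x y : α, v x > v y ↔ x < y

/-- Diminishing differences w.r.t. the reverse ranking ≻ʳ. -/
def DDR (v : α → ℝ) : Prop :=
  ∀ x1 x2 x3 : α, levR x3 = levR x2 + 1 → levR x2 = levR x1 + 1 → v x2 - v x1 ≤ v x3 - v x2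

/-- Increasing differences w.r.t. the reverse ranking ≻ʳ. -/
def IDR (v : α → ℝ) : Prop :=
  ∀ x1 x2 x3 : α, levR x3 = levR x2 + 1 → levR x2 = levR x1 + 1 → v x3 - v x2 ≤ v x2 - v x1

lemma lev_add_levR (x : α) : lev x + levR x = Fintype.card α + 1 := by
  classical
  have h := Finset.card_union_add_card_inter
    (Finset.univ.filter (· ≤ x)) (Finset.univ.filter (x ≤ ·))
  have hu : (Finset.univ.filter (· ≤ x)) ∪ (Finset.univ.filter (x ≤ ·)) =
      (Finset.univ : Finset α) := by
    ext a; simp [le_total a x]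
  have hi : (Finset.univ.filter (· ≤ x)) ∩ (Finset.univ.filter (x ≤ ·)) = {x} := by
    ext a; simp [Finset.mem_inter, le_antisymm_iff, and_comm]
  rw [hu, hi] at h
  simpa [lev, levR, Finset.card_univ] using h.symm

lemma levR_iff {x y : α} : levR x = levR y + 1 ↔ lev y = lev x + 1 := by
  have hx := lev_add_levR x
  have hy := lev_add_levR y
  omega

lemma msum_neg (u : α → ℝ) (X : Multiset α) : msum (fun a => -u a) X = -msum u X := by
  induction X using Multiset.induction with
  | empty => simp [msum]
  | cons a s ih => simp [msum] at ih ⊢; linarith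

/-- u(X) ≥ u(Y) for all additive ID utilities consistent with ≻ iff
v(Y) ≥ v(X) for all additive DD utilities consistent with the reverse ranking ≻ʳ. -/
theorem stmt12 (X Y : Multiset α) :
    (∀ u : α → ℝ, Consistent u → ID u → msum u Y ≤ msum u X) ↔
      (∀ v : α → ℝ, ConsistentR v → DDR v → msum v X ≤ msum v Y) := by
  constructor
  · intro h v hc hd
    have := h (fun a => -v a)
      (fun x y => by simpa [gt_iff_lt, neg_lt_neg_iff] using (hc y x))
      (fun x1 x2 x3 h32 h21 => by
        have := hd x3 x2 x1 (levR_iff.mpr h21) (levR_iff.mpr h32)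
        simp only [neg_sub_neg]; linarith)
    rw [msum_neg, msum_neg] at this
    linarith
  · intro h u hc hi
    have := h (fun a => -u a)
      (fun x y => by simpa [gt_iff_lt, neg_lt_neg_iff] using (hc y x))
      (fun x1 x2 x3 h32 h21 => by
        have := hi x3 x2 x1 (levR_iff.mp h21) (levR_iff.mp h32)
        simp only [neg_sub_neg]; linarith)
    rw [msum_neg, msum_neg] at this
    linarith
end

section
/- If there exists an NID-proportional allocation of M chores among n agents (i.e., an allocation with n·u_i(X_i) ≥ u_i(all chores) for every profile of consistent additive increasing-differences utilities), then M = m·n for an integer m, and every agent i receives no chore from W_i, the set of his ⌈(n−1)/2⌉ worst chores; in particular ∩_{i} W_i = ∅. -/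
variable {α : Type*} [Fintype α] [DecidableEq α] {n : ℕ}

lemma eps_le {p q r s : ℝ} (h : ∀ ε : ℝ, 0 < ε → p + ε * q ≤ r + ε * s) : p ≤ r := by
  by_contra hc
  push_neg at hc
  set D : ℝ := |q| + |s| + 1 with hD
  have hD0 : 0 < D := by positivity
  set ε : ℝ := (p - r) / (2 * D) with hε
  have hε0 : 0 < ε := by
    apply div_pos (by linarith) (by linarith)
  have h1 := h ε hε0
  have h2 : ε * (s - q) ≤ ε * D := by
    apply mul_le_mul_of_nonneg_left _ hε0.le
    have := le_abs_self s
    have := neg_abs_le q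
    simp only [hD]; linarith
  have h3 : ε * D = (p - r) / 2 := by
    rw [hε]
    field_simp
  nlinarith

lemma key' {α : Type*} [Fintype α] [DecidableEq α] {n : ℕ}
    (L : Fin n → α ≃ Fin (Fintype.card α)) (X : Fin n → Finset α)
    (hNIDPR : ∀ u : Fin n → α → ℝ,
      (∀ i, (∀ x, u i x < 0) ∧ ConsistentL (L i) (u i) ∧ IDL (L i) (u i)) →
      ∀ i, (∑ x : α, u i x) ≤ n * ∑ x ∈ X i, u i x)
    (g : ℕ → ℝ) (hmono : ∀ k, g k ≤ g (k + 1)) (hneg : ∀ k, g k ≤ 0)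
    (hcc : ∀ k, g (k + 2) - g (k + 1) ≤ g (k + 1) - g k) (i : Fin n) :
    (∑ x : α, g (L i x : ℕ)) ≤ n * ∑ x ∈ X i, g (L i x : ℕ) := by
  have gm : Monotone g := monotone_nat_of_le_succ hmono
  apply eps_le (q := ∑ x : α, (((L i x : ℕ) : ℝ) - Fintype.card α))
    (s := n * ∑ x ∈ X i, (((L i x : ℕ) : ℝ) - Fintype.card α))
  intro ε hε
  set u : Fin n → α → ℝ := fun j x => g (L j x : ℕ) + ε * (((L j x : ℕ) : ℝ) - Fintype.card α) with hu
  have hcond : ∀ j, (∀ x, u j x < 0) ∧ ConsistentL (L j) (u j) ∧ IDL (L j) (u j) := by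
    intro j
    refine ⟨?_, ?_, ?_⟩
    · intro x
      have hlt : ((L j x : ℕ) : ℝ) < Fintype.card α := by exact_mod_cast (L j x).isLt
      have := hneg (L j x : ℕ)
      simp only [hu]
      nlinarith
    · intro x y
      simp only [hu]
      constructor
      · intro hxy
        rcases lt_trichotomy ((L j y : ℕ)) ((L j x : ℕ)) with h | h | h
        · exact h
        · exfalso; rw [h] at hxy; linarith
        · exfalso
          have h1 : g (L j x : ℕ) ≤ g (L j y : ℕ) := gm h.le
          have h2 : ((L j x : ℕ) : ℝ) < ((L j y : ℕ) : ℝ) := by exact_mod_cast h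
          nlinarith
      · intro h
        have h1 : g (L j y : ℕ) ≤ g (L j x : ℕ) := gm (Fin.lt_def.mp h).le
        have h2 : ((L j y : ℕ) : ℝ) < ((L j x : ℕ) : ℝ) := by exact_mod_cast h
        nlinarith
    · intro x1 x2 x3 h32 h21
      simp only [hu, h32, h21]
      have := hcc (L j x1 : ℕ)
      rw [h21] at h32
      push_cast [h21, h32]
      ring_nf
      ring_nf at this
      linarith
  have hmain := hNIDPR u hcond i
  simp only [hu] at hmain
  rw [Finset.sum_add_distrib, Finset.sum_add_distrib, ← Finset.mul_sum, ← Finset.mul_sum] at hmain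
  linarith

/-- necessary conditions for existence of an NID-proportional allocation of
chores: the number of chores is an integer multiple of n, and no agent receives any of
his ceil((n-1)/2) worst chores (those with Borda level at most (n-1+1)/2 = ceil((n-1)/2));
in particular the intersection of all the sets W_i is empty. -/
theorem stmt14 (hn : 0 < n) (L : Fin n → α ≃ Fin (Fintype.card α))
    (X : Fin n → Finset α) (hpart : IsPartition X)
    (hNIDPR : ∀ u : Fin n → α → ℝ,
      (∀ i, (∀ x, u i x < 0) ∧ ConsistentL (L i) (u i) ∧ IDL (L i) (u i)) →
      ∀ i, (∑ x : α, u i x) ≤ n * ∑ x ∈ X i, u i x) :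
    (∃ m : ℕ, Fintype.card α = m * n) ∧
    (∀ i : Fin n, ∀ x ∈ X i, ¬ ((L i x : ℕ) < (n - 1 + 1) / 2)) ∧
    (∀ x : α, ∃ i : Fin n, ¬ ((L i x : ℕ) < (n - 1 + 1) / 2)) := by
  classical
  have hcardsum : ∑ i, (X i).card = Fintype.card α := by
    rw [← Finset.card_biUnion (fun i _ j _ hij => hpart.1 i j hij), hpart.2,
      Finset.card_univ]
  -- Step 1: n * |X i| ≤ M for every i
  have h1 : ∀ i, n * (X i).card ≤ Fintype.card α := by
    intro i
    have hk := key' L X hNIDPR (fun _ => (-1 : ℝ)) (fun _ => le_rfl) (fun _ => by norm_num)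
      (fun _ => by norm_num) i
    simp only [Finset.sum_const, Finset.card_univ, nsmul_eq_mul, mul_neg, mul_one] at hk
    have : ((n * (X i).card : ℕ) : ℝ) ≤ (Fintype.card α : ℕ) := by push_cast; nlinarith
    exact_mod_cast this
  -- Step 2: equality
  have heq : ∀ i, n * (X i).card = Fintype.card α := by
    intro i
    by_contra hne
    have hlt : n * (X i).card < Fintype.card α := lt_of_le_of_ne (h1 i) hne
    have hsum : ∑ j : Fin n, n * (X j).card = n * Fintype.card α := by
      rw [← Finset.mul_sum, hcardsum]
    have hstrict : ∑ j : Fin n, n * (X j).card < ∑ _j : Fin n, Fintype.card α :=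
      Finset.sum_lt_sum (fun j _ => h1 j) ⟨i, Finset.mem_univ i, hlt⟩
    simp only [Finset.sum_const, Finset.card_univ, Fintype.card_fin, smul_eq_mul] at hstrict
    omega
  have hb : ∀ i : Fin n, ∀ x ∈ X i, ¬ ((L i x : ℕ) < (n - 1 + 1) / 2) := by
    intro i x hx hlt
    have hn1 : n - 1 + 1 = n := by omega
    rw [hn1] at hlt
    have hM1 : 0 < Fintype.card α := Fintype.card_pos_iff.mpr ⟨x⟩
    have hcard1 : 0 < (X i).card := by
      rcases Nat.eq_zero_or_pos (X i).card with h | h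
      · exfalso; have := heq i; rw [h, mul_zero] at this; omega
      · exact h
    have hMn : n ≤ Fintype.card α := by
      calc n = n * 1 := (mul_one n).symm
        _ ≤ n * (X i).card := Nat.mul_le_mul_left n hcard1
        _ = Fintype.card α := heq i
    -- the key inequality with g k = -(n-1-k)
    have hk := key' L X hNIDPR (fun k => -(((n - 1 - k : ℕ)) : ℝ))
      (fun k => by
        show -(((n - 1 - k : ℕ)) : ℝ) ≤ -(((n - 1 - (k + 1) : ℕ)) : ℝ)
        have h0 : (n - 1 - (k + 1) : ℕ) ≤ (n - 1 - k : ℕ) := by omega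
        have := (Nat.cast_le (α := ℝ)).mpr h0
        linarith)
      (fun k => by
        show -(((n - 1 - k : ℕ)) : ℝ) ≤ 0
        simp [Nat.cast_nonneg])
      (fun k => by
        show -(((n - 1 - (k + 2) : ℕ)) : ℝ) - -(((n - 1 - (k + 1) : ℕ)) : ℝ)
          ≤ -(((n - 1 - (k + 1) : ℕ)) : ℝ) - -(((n - 1 - k : ℕ)) : ℝ)
        have h0 : 2 * (n - 1 - (k + 1)) ≤ (n - 1 - k) + (n - 1 - (k + 2)) := by omega
        have := (Nat.cast_le (α := ℝ)).mpr h0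
        push_cast at this
        linarith) i
    -- convert to an inequality of natural numbers
    have hA : (∑ x : α, -(((n - 1 - (L i x : ℕ) : ℕ)) : ℝ))
        = -((∑ j ∈ Finset.range (Fintype.card α), (n - 1 - j) : ℕ) : ℝ) := by
      rw [Equiv.sum_comp (L i) (fun j : Fin (Fintype.card α) => -(((n - 1 - (j : ℕ) : ℕ)) : ℝ)),
        Fin.sum_univ_eq_sum_range (fun j => -(((n - 1 - j : ℕ)) : ℝ))]
      push_cast
      rw [Finset.sum_neg_distrib]
    have hB : (∑ y ∈ X i, -(((n - 1 - (L i y : ℕ) : ℕ)) : ℝ))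
        = -((∑ y ∈ X i, (n - 1 - (L i y : ℕ)) : ℕ) : ℝ) := by
      push_cast
      rw [Finset.sum_neg_distrib]
    rw [hA, hB] at hk
    have hnat : n * (∑ y ∈ X i, (n - 1 - (L i y : ℕ)))
        ≤ ∑ j ∈ Finset.range (Fintype.card α), (n - 1 - j) := by
      have : ((n * ∑ y ∈ X i, (n - 1 - (L i y : ℕ)) : ℕ) : ℝ)
          ≤ ((∑ j ∈ Finset.range (Fintype.card α), (n - 1 - j) : ℕ) : ℝ) := by
        push_cast at hk ⊢
        linarith
      exact_mod_cast this
    -- evaluate the right-hand sum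
    have hS : ∑ j ∈ Finset.range (Fintype.card α), (n - 1 - j)
        = ∑ j ∈ Finset.range n, j := by
      rw [← Finset.sum_subset (Finset.range_subset_range.mpr hMn)
        (fun j _ hj => by simp only [Finset.mem_range, not_lt] at hj; omega)]
      exact Finset.sum_range_reflect (fun j => j) n
    have hGauss : (∑ j ∈ Finset.range n, j) * 2 = n * (n - 1) := Finset.sum_range_id_mul_two n
    -- lower-bound the left-hand sum
    have hsingle : (n - 1 - (L i x : ℕ)) ≤ ∑ y ∈ X i, (n - 1 - (L i y : ℕ)) :=
      Finset.single_le_sum (f := fun y => n - 1 - (L i y : ℕ)) (fun y _ => Nat.zero_le _) hx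
    have hchain : n * (2 * (n - 1 - (L i x : ℕ))) ≤ n * (n - 1) := by
      calc n * (2 * (n - 1 - (L i x : ℕ)))
          = 2 * (n * (n - 1 - (L i x : ℕ))) := by ring
        _ ≤ 2 * (n * ∑ y ∈ X i, (n - 1 - (L i y : ℕ))) :=
            Nat.mul_le_mul_left 2 (Nat.mul_le_mul_left n hsingle)
        _ ≤ 2 * ∑ j ∈ Finset.range (Fintype.card α), (n - 1 - j) :=
            Nat.mul_le_mul_left 2 hnat
        _ = (∑ j ∈ Finset.range n, j) * 2 := by rw [hS]; ring
        _ = n * (n - 1) := hGauss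
    have hfinal := Nat.le_of_mul_le_mul_left hchain hn
    omega
  refine ⟨⟨(X ⟨0, hn⟩).card, by rw [mul_comm]; exact (heq _).symm⟩, hb, ?_⟩
  intro x
  have hx : x ∈ Finset.univ.biUnion X := by rw [hpart.2]; exact Finset.mem_univ x
  obtain ⟨i, -, hxi⟩ := Finset.mem_biUnion.mp hx
  exact ⟨i, hb i x hxi⟩
end
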